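/- arXiv:2410.07449 — 10 statements merged into one kernel-verified Lean document; each statement's English description precedes it below -/
import Mathlib

section
/- For all natural numbers k, n, m, r with r ≤ m ≤ n and k ≤ n−m, one has ∑_{s=1}^{m+1} (s/(s+k)) · (−1)^s · C(m+1, s) · C(n−m+s, r) = − C(n−m−k, r) / C(m+k+1, k). -/
/-!
Write `N = n - m` and `M = m + 1`. The alternating binomial sum `∑ₛ (-1)^s C(M,s) f(s)` is
`(-1)^M Δ^M f (0)`, so it kills every polynomial of degree `< M`. Splitting
`s/(s+k) = 1 - k/(s+k)`, the first part vanishes because `r < M`. In the second part, Vandermonde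
gives `C(N+s, r) = ∑_{i+j=r} C(N-k, i) C(s+k, j)`; for `j ≥ 1` the quotient
`C(s+k, j)/(s+k) = C(s+k-1, j-1)/j` is a polynomial of degree `< M`, so only `j = 0` survives, and
`Δ^M (x ↦ 1/(x+k)) (0) = (-1)^M / (k C(M+k, k))` by induction on `M`.
-/

open Finset fwdDiff

section AddCommGroup

variable {M G : Type*} [AddCommMonoid M] [AddCommGroup G]

theorem fwdDiff_iter_sub (h : M) (f g : M → G) (n : ℕ) :
    Δ_[h] ^[n] (f - g) = Δ_[h] ^[n] f - Δ_[h] ^[n] g := by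
  simpa only [fwdDiff_aux.coe_fwdDiffₗ_pow] using map_sub (fwdDiff_aux.fwdDiffₗ M G h ^ n) f g

theorem fwdDiff_iter_comp_addMonoidHom {G' : Type*} [AddCommGroup G'] (h : M) (φ : G →+ G')
    (f : M → G) (n : ℕ) : Δ_[h] ^[n] (φ ∘ f) = φ ∘ Δ_[h] ^[n] f := by
  induction n generalizing f with
  | zero => rfl
  | succ n ih =>
    rw [Function.iterate_succ_apply, Function.iterate_succ_apply, ← ih]
    congr 1
    ext x
    simp [fwdDiff]

end AddCommGroup

theorem fwdDiff_iter_choose_eq_zero_of_lt {R : Type*} [Ring R] {t n : ℕ} (h : t < n) :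
    Δ_[1] ^[n] (fun x : ℕ ↦ (x.choose t : R)) = 0 := by
  have hℤ : Δ_[1] ^[n] (fun x : ℕ ↦ (x.choose t : ℤ)) = 0 := by
    obtain ⟨d, rfl⟩ := Nat.exists_eq_add_of_lt h
    have hΔt := fwdDiff_iter_choose 0 t
    rw [add_zero] at hΔt
    rw [show t + d + 1 = d + 1 + t by ring, Function.iterate_add_apply, hΔt,
      Function.iterate_succ_apply]
    simp only [Nat.choose_zero_right, Nat.cast_one, fwdDiff_const]
    exact Function.iterate_fixed (fwdDiff_const 1 0) d
  have hcast := fwdDiff_iter_comp_addMonoidHom 1 (Int.castAddHom R)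
    (fun x : ℕ ↦ (x.choose t : ℤ)) n
  rw [hℤ] at hcast
  ext x
  simpa [Function.comp_def] using congrFun hcast x

section CommRing

variable {R : Type*} [CommRing R]

theorem sum_range_neg_one_pow_mul_choose_mul (f : ℕ → R) (n : ℕ) :
    ∑ s ∈ range (n + 1), (-1) ^ s * n.choose s * f s = (-1) ^ n * Δ_[1] ^[n] f 0 := by
  rw [fwdDiff_iter_eq_sum_shift, mul_sum]
  refine sum_congr rfl fun s hs ↦ ?_
  have hsn : s ≤ n := Nat.lt_succ_iff.mp (mem_range.mp hs)
  rw [← Nat.sub_add_cancel hsn, pow_add]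
  simp only [zsmul_eq_mul, Int.cast_mul, Int.cast_pow, Int.cast_neg, Int.cast_one,
    Int.cast_natCast, zero_add, nsmul_eq_mul, mul_one, Nat.cast_id]
  rw [Nat.sub_add_cancel hsn]
  have hsq : (-1 : R) ^ (n - s) * (-1) ^ (n - s) = 1 := by
    rw [← pow_add, ← two_mul, pow_mul]; simp
  linear_combination (-(-1) ^ s * n.choose s * f s) * hsq

theorem sum_range_neg_one_pow_mul_choose_mul_choose_add {t n : ℕ} (h : t < n) (a : ℕ) :
    ∑ s ∈ range (n + 1), (-1 : R) ^ s * n.choose s * (s + a).choose t = 0 := by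
  rw [sum_range_neg_one_pow_mul_choose_mul (fun s ↦ ((s + a).choose t : R)),
    fwdDiff_iter_comp_add 1 (fun x ↦ (x.choose t : R)) a n 0,
    fwdDiff_iter_choose_eq_zero_of_lt h]
  simp

end CommRing

section Field

variable {K : Type*} [Field K] [CharZero K]

theorem Nat.cast_add_one_choose_add_one_div (m t : ℕ) :
    ((m + 1).choose (t + 1) : K) / (m + 1) = m.choose t / (t + 1) := by
  have h := Nat.add_one_mul_choose_eq m t
  field_simp
  exact_mod_cast h.symm

theorem fwdDiff_iter_inv_natCast_add_apply_zero {k : ℕ} (hk : 0 < k) (n : ℕ) :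
    Δ_[1] ^[n] (fun x : ℕ ↦ ((x : K) + k)⁻¹) 0 = (-1) ^ n / (k * (n + k).choose k) := by
  induction n generalizing k with
  | zero => simp
  | succ n ih =>
    have hΔ : Δ_[1] (fun x : ℕ ↦ ((x : K) + k)⁻¹) =
        (fun x : ℕ ↦ ((x : K) + (k + 1 : ℕ))⁻¹) - fun x : ℕ ↦ ((x : K) + k)⁻¹ := by
      ext x; simp [fwdDiff]; ring
    rw [Function.iterate_succ_apply, hΔ, fwdDiff_iter_sub, Pi.sub_apply, ih hk,
      ih (by omega : 0 < k + 1), show n + (k + 1) = n + k + 1 by omega,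
      show n + 1 + k = n + k + 1 by omega]
    have h₁ : ((n + k + 1 : ℕ) : K) * (n + k).choose k =
        (n + k + 1).choose (k + 1) * (k + 1 : ℕ) := by
      exact_mod_cast Nat.add_one_mul_choose_eq (n + k) k
    have h₂ : ((n + k + 1).choose (k + 1) : K) * (k + 1 : ℕ) =
        (n + k + 1).choose k * (n + 1 : ℕ) := by
      rw [← Nat.cast_mul, ← Nat.cast_mul, Nat.choose_succ_right_eq]; congr 2; omega
    have : ((n + k).choose k : K) ≠ 0 := by exact_mod_cast (Nat.choose_pos (by omega)).ne'
    have : ((n + k + 1).choose (k + 1) : K) ≠ 0 := by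
      exact_mod_cast (Nat.choose_pos (by omega)).ne'
    have : ((n + k + 1).choose k : K) ≠ 0 := by exact_mod_cast (Nat.choose_pos (by omega)).ne'
    have : (k : K) ≠ 0 := by exact_mod_cast hk.ne'
    push_cast at h₁ h₂ ⊢
    field_simp
    linear_combination (-1 : K) ^ n * ((n + k + 1).choose k : K) * h₁ +
      (-1 : K) ^ n * ((n + k).choose k : K) * h₂

theorem fwdDiff_iter_choose_add_div_apply_zero {n N k r : ℕ} (hk : 0 < k) (hkN : k ≤ N)
    (hrn : r ≤ n) :
    Δ_[1] ^[n] (fun x : ℕ ↦ ((x + N).choose r : K) / (x + k)) 0 =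
      (-1) ^ n * (N - k).choose r / (k * (n + k).choose k) := by
  have hvandermonde : (fun x : ℕ ↦ ((x + N).choose r : K) / (x + k)) =
      ∑ ij ∈ antidiagonal r,
        ((N - k).choose ij.1 : K) • fun x : ℕ ↦ ((x + k).choose ij.2 : K) / (x + k) := by
    ext x
    rw [show x + N = N - k + (x + k) by omega, Nat.add_choose_eq]
    simp only [Finset.sum_apply, Pi.smul_apply, smul_eq_mul, Nat.cast_sum, Nat.cast_mul, sum_div,
      mul_div_assoc]
  rw [hvandermonde, fwdDiff_iter_finsetSum, Finset.sum_apply, sum_eq_single (r, 0)]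
  · simp only [fwdDiff_iter_const_smul, Pi.smul_apply, Nat.choose_zero_right, Nat.cast_one,
      one_div, fwdDiff_iter_inv_natCast_add_apply_zero hk, smul_eq_mul]
    ring
  · rintro ⟨i, j⟩ hij hne
    obtain ⟨t, rfl⟩ : ∃ t, j = t + 1 := Nat.exists_eq_succ_of_ne_zero (by aesop)
    obtain ⟨a, rfl⟩ : ∃ a, k = a + 1 := Nat.exists_eq_succ_of_ne_zero hk.ne'
    have htn : t < n := by have := mem_antidiagonal.mp hij; omega
    have hpoly : (fun x : ℕ ↦ ((x + (a + 1)).choose (t + 1) : K) / ((x : K) + (a + 1 : ℕ))) =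
        ((t : K) + 1)⁻¹ • fun x : ℕ ↦ ((x + a).choose t : K) := by
      ext x
      rw [Pi.smul_apply, smul_eq_mul, ← add_assoc, inv_mul_eq_div]
      exact_mod_cast Nat.cast_add_one_choose_add_one_div (K := K) (x + a) t
    simp only [fwdDiff_iter_const_smul, Pi.smul_apply, hpoly, smul_eq_mul]
    rw [fwdDiff_iter_comp_add 1 (fun x ↦ (x.choose t : K)) a n 0,
      fwdDiff_iter_choose_eq_zero_of_lt htn]
    simp
  · simp

theorem sum_range_div_add_mul_neg_one_pow_mul_choose_mul_choose {n N k r : ℕ} (hk : 0 < k)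
    (hkN : k ≤ N) (hrn : r < n) :
    ∑ s ∈ range (n + 1), (s : K) / (s + k) * (-1) ^ s * n.choose s * (N + s).choose r =
      -((N - k).choose r : K) / (n + k).choose k := by
  have hk' : (k : K) ≠ 0 := by exact_mod_cast hk.ne'
  calc _ = ∑ s ∈ range (n + 1), (-1 : K) ^ s * n.choose s * (s + N).choose r -
        k * ∑ s ∈ range (n + 1), (-1 : K) ^ s * n.choose s * ((s + N).choose r / (s + k)) := by
        rw [mul_sum, ← sum_sub_distrib]
        refine sum_congr rfl fun s _ ↦ ?_
        have : (s : K) + k ≠ 0 := by norm_cast; omega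
        rw [add_comm s]
        field_simp
        ring
    _ = 0 - k * ((-1) ^ n * ((-1) ^ n * (N - k).choose r / (k * (n + k).choose k))) := by
        rw [sum_range_neg_one_pow_mul_choose_mul_choose_add hrn,
          sum_range_neg_one_pow_mul_choose_mul,
          fwdDiff_iter_choose_add_div_apply_zero hk hkN hrn.le]
    _ = _ := by
        rw [← mul_div_assoc, ← mul_assoc, ← pow_add, ← two_mul, pow_mul]
        field_simp
        simp

end Field

theorem sum_range_succ_eq_add_sum_Icc_one {M : Type*} [AddCommMonoid M] (f : ℕ → M) (n : ℕ) :
    ∑ s ∈ range (n + 1), f s = f 0 + ∑ s ∈ Icc 1 n, f s := by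
  rw [Nat.range_succ_eq_Icc_zero, ← insert_Icc_add_one_left_eq_Icc n.zero_le,
    sum_insert (by simp), zero_add]

theorem stmt6_general (k n m r : ℕ) (h1 : r ≤ m) (h3 : k ≤ n - m) :
    ∑ s ∈ Finset.Icc 1 (m + 1),
      ((s : ℚ) / ((s : ℚ) + k)) * (-1) ^ s * ((m + 1).choose s : ℚ) * ((n - m + s).choose r : ℚ) =
      -((n - m - k).choose r : ℚ) / ((m + k + 1).choose k : ℚ) := by
  rcases Nat.eq_zero_or_pos k with rfl | hk
  · have hvanish := sum_range_neg_one_pow_mul_choose_mul_choose_add (R := ℚ)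
      (Nat.lt_succ_of_le h1) (n - m)
    rw [sum_range_succ_eq_add_sum_Icc_one] at hvanish
    calc _ = ∑ s ∈ Icc 1 (m + 1),
          (-1 : ℚ) ^ s * (m + 1).choose s * (s + (n - m)).choose r := by
          refine sum_congr rfl fun s hs ↦ ?_
          have : (s : ℚ) ≠ 0 := by have := (mem_Icc.mp hs).1; positivity
          rw [Nat.cast_zero, add_zero, div_self this, add_comm s]
          ring
      _ = _ := by simp at hvanish ⊢; linarith
  · have hrange := sum_range_div_add_mul_neg_one_pow_mul_choose_mul_choose (K := ℚ) hk h3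
      (Nat.lt_succ_of_le h1)
    rw [sum_range_succ_eq_add_sum_Icc_one, show m + 1 + k = m + k + 1 by omega] at hrange
    simpa using hrange

theorem stmt6 (k n m r : ℕ) (h1 : r ≤ m) (h2 : m ≤ n) (h3 : k ≤ n - m) :
    ∑ s ∈ Finset.Icc 1 (m + 1),
      ((s : ℚ) / ((s : ℚ) + k)) * (-1) ^ s * ((m + 1).choose s : ℚ) * ((n - m + s).choose r : ℚ) =
      -((n - m - k).choose r : ℚ) / ((m + k + 1).choose k : ℚ) :=
  stmt6_general k n m r h1 h3
end

section
/- Fix N ∈ ℕ, complex numbers a_{i,j} for 1 ≤ i ≤ N, 0 ≤ j ≤ i, and let a_i(x) = ∑_{j=0}^{i} a_{i,j} x^j. Define δ_m^{(k)} = ∑_{i=k}^{min(m,N)} C(m,i) · i! · a_{i,i−k} for all m ∈ ℕ, k ≥ 0. Suppose for every n ∈ ℕ there is a monic polynomial P_n(x) = ∑_{i=0}^{n} b_{n,i} x^i of degree n and λ_n ∈ ℂ with ∑_{i=1}^{N} a_i(x) · P_n^{(i)}(x) = λ_n · P_n(x), and suppose the eigenvalues λ_0, λ_1, λ_2, … are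 pairwise distinct. Then for every n ∈ ℕ and every i with 1 ≤ i ≤ n, the coefficient b_{n,n−i} equals the determinant of the i×i upper Hessenberg matrix H whose entries (with rows and columns indexed from 1 to i) are: H_{j,l} = δ_{n−j+1}^{(l−j+1)} / (λ_n − λ_{n−l}) for l ≥ j, H_{j,j−1} = −1 for 2 ≤ j ≤ i, and H_{j,l} = 0 for l < j−1. -/
open Finset Polynomial

/-- The polynomial coefficient `a_i(x) = ∑_{j=0}^{i} a_{i,j} x^j` of the Bochner operator. -/
noncomputable def apoly (A : ℕ → ℕ → ℂ) (i : ℕ) : Polynomial ℂ :=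
  ∑ j ∈ range (i + 1), C (A i j) * X ^ j

/-- `δ_n^{(k)} = ∑_{i=k}^{min(n,N)} C(n,i) i! a_{i,i-k}`. -/
noncomputable def delta (N : ℕ) (A : ℕ → ℕ → ℂ) (n k : ℕ) : ℂ :=
  ∑ i ∈ Icc k (min n N), (n.choose i : ℂ) * (i.factorial : ℂ) * A i (i - k)

/-!
Comparing the coefficients of `x ^ (n - l - 1)` in the eigen-equation gives
`(λ_n - λ_{n-l-1}) b_{n,n-l-1} = ∑_{j ≤ l} δ_{n-j}^{(l-j+1)} b_{n,n-j}`, once the leading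
coefficient has identified `λ_m + a_{0,0}` with `δ_m^{(0)}`. As the `λ`'s are distinct, the
sequence `c_j = b_{n,n-j}` satisfies `c_0 = 1` and `c_{l+1} = ∑_{j ≤ l} h_{j,l} c_j`, where `h` is
the Hessenberg matrix of the theorem. For such a sequence, adding `c_j` times row `j` to row `0` turns
that row into `(0, …, 0, c_{m+1})`, and the complementary minor is triangular with `-1` on its
diagonal, so the determinant of size `m + 1` is `c_{m+1}`.
-/

namespace Matrix

variable {R : Type*} [CommRing R]

theorem det_updateRow_zero_single_last {m : ℕ} (M : Matrix (Fin (m + 1)) (Fin (m + 1)) R)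
    (x : R) :
    (M.updateRow 0 (Pi.single (Fin.last m) x)).det
      = (-1) ^ m * x * (M.submatrix Fin.succ Fin.castSucc).det := by
  rw [det_succ_row_zero, Fintype.sum_eq_single (Fin.last m)]
  · have hminor : (M.updateRow 0 (Pi.single (Fin.last m) x)).submatrix Fin.succ Fin.castSucc
        = M.submatrix Fin.succ Fin.castSucc := by
      ext r l
      simp
    simp [Fin.succAbove_last, hminor]
  · intro j hj
    simp [hj]

section Hessenberg

variable (h : ℕ → ℕ → R) (c : ℕ → R) {m : ℕ}

theorem sum_range_mul_col_of_hessenberg (hsub : ∀ l, h (l + 1) l = -1)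
    (hlow : ∀ j l, l + 1 < j → h j l = 0)
    (hrec : ∀ l ≤ m, c (l + 1) = ∑ j ∈ range (l + 1), c j * h j l) {l : ℕ}
    (hl : l ≤ m) : ∑ j ∈ range (m + 1), c j * h j l = if l = m then c (m + 1) else 0 := by
  split_ifs with hlm
  · subst hlm
    exact (hrec l le_rfl).symm
  · have htrunc : ∑ j ∈ range (l + 2), c j * h j l = ∑ j ∈ range (m + 1), c j * h j l :=
      sum_subset (range_subset_range.mpr (by omega)) fun j _ hj ↦ by
        rw [hlow j l (by simp at hj; omega), mul_zero]
    rw [← htrunc, sum_range_succ, ← hrec l hl, hsub]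
    ring

theorem det_hessenberg (hsub : ∀ l, h (l + 1) l = -1) (hlow : ∀ j l, l + 1 < j → h j l = 0)
    (hc0 : c 0 = 1) (hrec : ∀ l ≤ m, c (l + 1) = ∑ j ∈ range (l + 1), c j * h j l) :
    (Matrix.of fun j l : Fin (m + 1) ↦ h j l).det = c (m + 1) := by
  set M := Matrix.of fun j l : Fin (m + 1) ↦ h j l
  have hcomb : ∑ k : Fin (m + 1), c k • M k = Pi.single (Fin.last m) (c (m + 1)) := by
    ext l
    calc (∑ k : Fin (m + 1), c k • M k) l = ∑ k : Fin (m + 1), c k * h k l := by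
          simp [Finset.sum_apply, M]
      _ = ∑ k ∈ range (m + 1), c k * h k l :=
          Fin.sum_univ_eq_sum_range (fun k ↦ c k * h k l) _
      _ = if (l : ℕ) = m then c (m + 1) else 0 :=
          sum_range_mul_col_of_hessenberg h c hsub hlow hrec (Fin.is_le l)
      _ = Pi.single (M := fun _ ↦ R) (Fin.last m) (c (m + 1)) l := by
          simp [Pi.single_apply, Fin.ext_iff]
  have hminor : (M.submatrix Fin.succ Fin.castSucc).det = (-1) ^ m := by
    have htri : (M.submatrix Fin.succ Fin.castSucc).IsUpperTriangular := fun r l hlr ↦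
      hlow _ _ (by simp at hlr ⊢; omega)
    simp [det_of_isUpperTriangular htri, M, hsub]
  calc M.det = (M.updateRow 0 (∑ k : Fin (m + 1), c k • M k)).det := by
        simp [det_updateRow_sum, hc0]
    _ = c (m + 1) := by
      rw [hcomb, det_updateRow_zero_single_last, hminor, mul_comm, ← mul_assoc, ← pow_add,
        ← two_mul, pow_mul, neg_one_sq, one_pow, one_mul]

end Hessenberg

end Matrix

section Bochner

variable (N : ℕ) (A : ℕ → ℕ → ℂ)

theorem delta_eq_sum_descFactorial (m k : ℕ) :
    delta N A m k = ∑ i ∈ Icc k N, (m.descFactorial i : ℂ) * A i (i - k) := by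
  rw [delta, ← sum_subset (Icc_subset_Icc_right (min_le_right m N))]
  · refine sum_congr rfl fun i _ ↦ ?_
    rw [Nat.descFactorial_eq_factorial_mul_choose]
    push_cast
    ring
  · intro i hi hi'
    simp only [mem_Icc] at hi hi'
    simp [Nat.descFactorial_eq_zero_iff_lt.mpr (by omega : m < i)]

theorem coeff_apoly_mul_iterate_derivative (q : ℂ[X]) (i m : ℕ) :
    (apoly A i * derivative^[i] q).coeff m = ∑ k ∈ range (i + 1),
      A i (i - k) * ((m + k).descFactorial i : ℂ) * q.coeff (m + k) := by
  rw [apoly, sum_mul, finsetSum_coeff, ← sum_range_reflect]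
  refine sum_congr rfl fun k hk ↦ ?_
  have hki : k ≤ i := Nat.lt_succ_iff.mp (mem_range.mp hk)
  rw [Nat.add_sub_cancel, mul_right_comm, coeff_mul_X_pow', coeff_C_mul, mul_assoc]
  split_ifs with hm
  · rw [coeff_iterate_derivative, nsmul_eq_mul, show m - (i - k) + i = m + k by omega]
  · simp [Nat.descFactorial_eq_zero_iff_lt.mpr (by omega : m + k < i)]

theorem coeff_sum_apoly_mul_iterate_derivative_add (q : ℂ[X]) (m : ℕ) :
    (∑ i ∈ Icc 1 N, apoly A i * derivative^[i] q).coeff m + A 0 0 * q.coeff m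
      = ∑ k ∈ range (N + 1), delta N A (m + k) k * q.coeff (m + k) := by
  have hrange : range (N + 1) = insert 0 (Icc 1 N) := by
    ext i
    simp only [mem_range, mem_insert, mem_Icc]
    omega
  calc (∑ i ∈ Icc 1 N, apoly A i * derivative^[i] q).coeff m + A 0 0 * q.coeff m
      = ∑ i ∈ range (N + 1), (apoly A i * derivative^[i] q).coeff m := by
        rw [hrange, sum_insert (by simp), finsetSum_coeff, add_comm,
          coeff_apoly_mul_iterate_derivative]
        simp
    _ = ∑ i ∈ range (N + 1), ∑ k ∈ range (i + 1),
          A i (i - k) * ((m + k).descFactorial i : ℂ) * q.coeff (m + k) := by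
        simp only [coeff_apoly_mul_iterate_derivative]
    _ = ∑ k ∈ range (N + 1), ∑ i ∈ Icc k N,
          A i (i - k) * ((m + k).descFactorial i : ℂ) * q.coeff (m + k) :=
        sum_comm' fun i k ↦ by simp only [mem_range, mem_Icc]; omega
    _ = ∑ k ∈ range (N + 1), delta N A (m + k) k * q.coeff (m + k) := by
        simp only [delta_eq_sum_descFactorial, sum_mul]
        exact sum_congr rfl fun k _ ↦ sum_congr rfl fun i _ ↦ by ring

end Bochner

section Eigenpolynomials

variable {N : ℕ} {A : ℕ → ℕ → ℂ} {lam : ℕ → ℂ} {P : ℕ → ℂ[X]}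

theorem eigenvalue_add_mul_coeff (heq : ∀ n, ∑ i ∈ Icc 1 N, apoly A i * derivative^[i] (P n)
      = C (lam n) * P n) (n m : ℕ) :
    (lam n + A 0 0) * (P n).coeff m
      = ∑ k ∈ range (N + 1), delta N A (m + k) k * (P n).coeff (m + k) := by
  rw [← coeff_sum_apoly_mul_iterate_derivative_add, heq, coeff_C_mul, add_mul]

theorem eigenvalue_add_eq_delta (hmon : ∀ n, (P n).Monic) (hdeg : ∀ n, (P n).natDegree = n)
    (heq : ∀ n, ∑ i ∈ Icc 1 N, apoly A i * derivative^[i] (P n) = C (lam n) * P n) (n : ℕ) :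
    lam n + A 0 0 = delta N A n 0 := by
  have hlead : (P n).coeff n = 1 := by
    simpa [hdeg n] using (hmon n).coeff_natDegree
  have h := eigenvalue_add_mul_coeff heq n n
  rw [sum_eq_single 0 (fun k _ hk ↦ by
      rw [coeff_eq_zero_of_natDegree_lt (by rw [hdeg]; omega), mul_zero]) (by simp)] at h
  simpa [hlead] using h

theorem eigenvalue_sub_mul_coeff (hmon : ∀ n, (P n).Monic) (hdeg : ∀ n, (P n).natDegree = n)
    (heq : ∀ n, ∑ i ∈ Icc 1 N, apoly A i * derivative^[i] (P n) = C (lam n) * P n)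
    {n l : ℕ} (hl : l + 1 ≤ n) :
    (lam n - lam (n - (l + 1))) * (P n).coeff (n - (l + 1))
      = ∑ j ∈ range (l + 1), delta N A (n - j) (l - j + 1) * (P n).coeff (n - j) := by
  set m := n - (l + 1) with hm
  set f : ℕ → ℂ := fun k ↦ delta N A (m + (k + 1)) (k + 1) * (P n).coeff (m + (k + 1))
  have hf : ∀ k, min N (l + 1) ≤ k → f k = 0 := by
    intro k hk
    rcases min_le_iff.mp hk with hNk | hlk
    · simp [f, delta, Icc_eq_empty (by omega : ¬ k + 1 ≤ min (m + (k + 1)) N)]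
    · have hlt : (P n).natDegree < m + (k + 1) := by rw [hdeg]; omega
      simp [f, coeff_eq_zero_of_natDegree_lt hlt]
  have hsum : ∑ k ∈ range N, f k = ∑ k ∈ range (l + 1), f k :=
    (eventually_constant_sum hf (min_le_left _ _)).trans
      (eventually_constant_sum hf (min_le_right _ _)).symm
  have h := eigenvalue_add_mul_coeff heq n m
  rw [sum_range_succ', add_zero, ← eigenvalue_add_eq_delta hmon hdeg heq m, hsum,
    ← sum_range_reflect] at h
  have hreflect : ∑ j ∈ range (l + 1), f (l + 1 - 1 - j)
      = ∑ j ∈ range (l + 1), delta N A (n - j) (l - j + 1) * (P n).coeff (n - j) :=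
    sum_congr rfl fun j hj ↦ by
      have hjl : j ≤ l := Nat.lt_succ_iff.mp (mem_range.mp hj)
      simp only [f, show l + 1 - 1 - j + 1 = l - j + 1 by omega,
        show m + (l - j + 1) = n - j by omega]
  linear_combination h + hreflect

theorem coeff_sub_succ_eq_sum_div (hmon : ∀ n, (P n).Monic) (hdeg : ∀ n, (P n).natDegree = n)
    (heq : ∀ n, ∑ i ∈ Icc 1 N, apoly A i * derivative^[i] (P n) = C (lam n) * P n)
    (hdist : Function.Injective lam) {n l : ℕ} (hl : l + 1 ≤ n) :
    (P n).coeff (n - (l + 1)) = ∑ j ∈ range (l + 1),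
      (P n).coeff (n - j) * (delta N A (n - j) (l - j + 1) / (lam n - lam (n - (l + 1)))) := by
  have hgap : lam n - lam (n - (l + 1)) ≠ 0 :=
    sub_ne_zero.mpr fun h ↦ absurd (hdist h) (by omega)
  rw [← mul_div_cancel_left₀ ((P n).coeff (n - (l + 1))) hgap,
    eigenvalue_sub_mul_coeff hmon hdeg heq hl, sum_div]
  exact sum_congr rfl fun j _ ↦ by ring

end Eigenpolynomials

theorem stmt9 (N : ℕ) (A : ℕ → ℕ → ℂ) (lam : ℕ → ℂ) (P : ℕ → Polynomial ℂ)
    (hmon : ∀ n, (P n).Monic) (hdeg : ∀ n, (P n).natDegree = n)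
    (heq : ∀ n, ∑ i ∈ Icc 1 N, apoly A i * (Polynomial.derivative^[i] (P n)) = C (lam n) * P n)
    (hdist : Function.Injective lam) :
    ∀ n i : ℕ, 1 ≤ i → i ≤ n →
      (P n).coeff (n - i) =
        Matrix.det (fun j l : Fin i =>
          if (j : ℕ) ≤ (l : ℕ) then
            delta N A (n - (j : ℕ)) ((l : ℕ) - (j : ℕ) + 1) / (lam n - lam (n - ((l : ℕ) + 1)))
          else if (j : ℕ) = (l : ℕ) + 1 then (-1 : ℂ)
          else 0) := by
  intro n i hi hin
  obtain ⟨m, rfl⟩ : ∃ m, i = m + 1 := ⟨i - 1, by omega⟩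
  refine (Matrix.det_hessenberg (fun j l ↦ if j ≤ l then
      delta N A (n - j) (l - j + 1) / (lam n - lam (n - (l + 1)))
    else if j = l + 1 then -1 else 0) (fun j ↦ (P n).coeff (n - j)) (fun l ↦ by simp)
    (fun j l hlj ↦ by simp [show ¬ j ≤ l by omega, show j ≠ l + 1 by omega])
    (by simpa [hdeg n] using (hmon n).coeff_natDegree) fun l hl ↦ ?_).symm
  rw [coeff_sub_succ_eq_sum_div hmon hdeg heq hdist (by omega)]
  exact sum_congr rfl fun j hj ↦ by rw [if_pos (Nat.lt_succ_iff.mp (mem_range.mp hj))]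
end

section
/- Fix N ∈ ℕ and complex numbers a_{i,j} for 1 ≤ i ≤ N, 0 ≤ j ≤ i. Define δ_n^{(k)} = ∑_{i=k}^{min(n,N)} C(n,i) · i! · a_{i,i−k} for all n ∈ ℕ, k ≥ 0. Then: (a) for every n ≥ N+1 and every k with 0 ≤ k ≤ N, δ_n^{(k)} = ∑_{i=k}^{N} (−1)^{N−i} · C(n,i) · C(n−i−1, N−i) · δ_i^{(k)}; and (b) δ_n^{(k)} = 0 whenever n ≥ k > N. -/
/-!
For every `n`, `δ_n^{(k)} = ∑_{j=k}^{N} C(n,j) c_j` with `c_j = j! a_{j,j-k}`, since `C(n,j) = 0`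
for `j > n`; this is a polynomial of degree at most `N` in `n`. For `n > N` the weights
`(-1)^{N-i} C(n,i) C(n-i-1,N-i)` are the values at `n` of the Lagrange basis polynomials for the
nodes `0, …, N`, so it suffices to interpolate each `C(·,j)`. After
`C(n,i) C(i,j) = C(n,j) C(n-j,i-j)` this is the Chu–Vandermonde identity
`∑_m C(t,m) C(M-t,M-m) = C(M,M) = 1`, the negative upper index being produced by upper negation.
-/

open Finset

theorem ringChoose_neg_natCast_succ (a b : ℕ) :
    Ring.choose (-((a : ℤ) + 1)) b = (-1) ^ b * ((a + b).choose b : ℤ) := by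
  rw [Ring.choose_neg, show (a : ℤ) + 1 + b - 1 = ((a + b : ℕ) : ℤ) by push_cast; ring,
    Ring.choose_natCast, Int.negOnePow_def, Units.smul_def, smul_eq_mul]
  rfl

theorem sum_range_neg_one_pow_mul_choose_mul_choose {M t : ℕ} (h : M < t) :
    ∑ m ∈ range (M + 1), (-1 : ℤ) ^ (M - m) * t.choose m * (t - m - 1).choose (M - m) = 1 := by
  have hterm : ∀ m ∈ range (M + 1), (-1 : ℤ) ^ (M - m) * t.choose m * (t - m - 1).choose (M - m)
      = Ring.choose (t : ℤ) m * Ring.choose ((M : ℤ) - t) (M - m) := by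
    intro m hm
    have hm : m ≤ M := Nat.lt_succ_iff.mp (mem_range.mp hm)
    rw [Ring.choose_natCast, show (M : ℤ) - t = -(((t - M - 1 : ℕ) : ℤ) + 1) by omega,
      ringChoose_neg_natCast_succ, show t - M - 1 + (M - m) = t - m - 1 by omega]
    ring
  rw [sum_congr rfl hterm, ← Nat.sum_antidiagonal_eq_sum_range_succ
      (fun i j => Ring.choose (t : ℤ) i * Ring.choose ((M : ℤ) - t) j),
    ← Ring.add_choose_eq _ (Commute.all _ _), add_sub_cancel, Ring.choose_natCast,
    Nat.choose_self, Nat.cast_one]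

/-- The Lagrange basis polynomial of the node `i` among `0, …, N`, evaluated at `n > N`. -/
def lagrangeWeight (R : Type*) [Ring R] (N n i : ℕ) : R :=
  (-1) ^ (N - i) * n.choose i * (n - i - 1).choose (N - i)

theorem sum_lagrangeWeight_mul_choose {N n k j : ℕ} (hn : N < n) (hkj : k ≤ j) (hjN : j ≤ N) :
    ∑ i ∈ Icc k N, lagrangeWeight ℤ N n i * i.choose j = n.choose j := by
  calc ∑ i ∈ Icc k N, lagrangeWeight ℤ N n i * i.choose j
      = ∑ i ∈ Ico j (N + 1), lagrangeWeight ℤ N n i * i.choose j := by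
        refine (sum_subset (Icc_subset_Icc_left hkj) fun i _ hi => ?_).symm
        rw [Nat.choose_eq_zero_of_lt (by simp_all), Nat.cast_zero, mul_zero]
    _ = ∑ m ∈ range (N - j + 1), n.choose j *
          ((-1 : ℤ) ^ (N - j - m) * (n - j).choose m * (n - j - m - 1).choose (N - j - m)) := by
        rw [sum_Ico_eq_sum_range, show N + 1 - j = N - j + 1 by omega]
        refine sum_congr rfl fun m _ => ?_
        have h := Nat.choose_mul (n := n) (k := j + m) (s := j) (by omega)
        rw [Nat.add_sub_cancel_left] at h
        apply_fun (Nat.cast : ℕ → ℤ) at h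
        push_cast at h
        simp only [lagrangeWeight, Nat.sub_add_eq]
        linear_combination ((-1 : ℤ) ^ (N - j - m) * (n - j - m - 1).choose (N - j - m)) * h
    _ = n.choose j := by
        rw [← mul_sum, sum_range_neg_one_pow_mul_choose_mul_choose (by omega), mul_one]

theorem sum_choose_mul_eq_sum_lagrangeWeight_mul {R : Type*} [CommRing R] {N n : ℕ} (hn : N < n)
    (k : ℕ) (c : ℕ → R) :
    ∑ j ∈ Icc k N, n.choose j * c j =
      ∑ i ∈ Icc k N, lagrangeWeight R N n i * ∑ j ∈ Icc k N, i.choose j * c j := by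
  simp only [mul_sum]
  rw [sum_comm]
  refine sum_congr rfl fun j hj => ?_
  obtain ⟨hkj, hjN⟩ := mem_Icc.mp hj
  have h := congrArg (Int.cast : ℤ → R) (sum_lagrangeWeight_mul_choose hn hkj hjN)
  push_cast [lagrangeWeight] at h
  simp only [lagrangeWeight, ← mul_assoc, ← sum_mul, h]

theorem delta_eq_sum_Icc (N : ℕ) (A : ℕ → ℕ → ℂ) (n k : ℕ) :
    delta N A n k = ∑ j ∈ Icc k N, n.choose j * (j.factorial * A j (j - k)) := by
  refine sum_subset (Icc_subset_Icc_right (min_le_right n N)) (fun j _ hjn => ?_) |>.trans ?_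
  · have : n < j := by simp_all
    rw [Nat.choose_eq_zero_of_lt this, Nat.cast_zero, zero_mul, zero_mul]
  · simp only [mul_assoc]

theorem delta_eq_zero_of_lt {N : ℕ} (A : ℕ → ℕ → ℂ) {n k : ℕ} (h : N < k) : delta N A n k = 0 := by
  rw [delta_eq_sum_Icc, Icc_eq_empty (by omega), sum_empty]

theorem stmt10 (N : ℕ) (A : ℕ → ℕ → ℂ) :
    (∀ n, N + 1 ≤ n → ∀ k ≤ N,
        delta N A n k = ∑ i ∈ Icc k N,
          (-1 : ℂ) ^ (N - i) * (n.choose i : ℂ) * ((n - i - 1).choose (N - i) : ℂ) * delta N A i k) ∧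
    (∀ n k : ℕ, N < k → k ≤ n → delta N A n k = 0) := by
  refine ⟨fun n hn k _ => ?_, fun n k hk _ => delta_eq_zero_of_lt A hk⟩
  simp only [delta_eq_sum_Icc N A _ k]
  exact sum_choose_mul_eq_sum_lagrangeWeight_mul hn k _
end

section
/- Fix N ∈ ℕ and complex numbers a_{i,j} for 1 ≤ i ≤ N, 0 ≤ j ≤ i, and let a_i(x) = ∑_{j=0}^{i} a_{i,j} x^j. Suppose for every n ∈ ℕ there is a monic polynomial P_n of degree n and λ_n ∈ ℂ with ∑_{i=1}^{N} a_i(x) · P_n^{(i)}(x) = λ_n · P_n(x). Then for every n ≥ N+1, λ_n = ∑_{i=1}^{N} (−1)^{N−i} · C(n,i) · C(n−i−1, N−i) · λ_i. -/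
/-
Comparing the coefficients of `x^n` in the eigen-equation shows that
`λ_n = ∑_{i=1}^N a_{i,i} n(n-1)⋯(n-i+1)`, i.e. `λ_n = Λ(n)` for a polynomial `Λ` of degree
at most `N` with `Λ(0) = 0`. The claimed formula is Lagrange interpolation of `Λ` at the nodes
`0, 1, …, N`, evaluated at an integer `n > N`; it follows from the Gregory–Newton formula
`Λ(n) = ∑_{k ≤ N} C(n,k) Δ^k Λ(0)` by expanding the differences and summing the alternating
binomial sums in closed form.
-/

open Finset Polynomial

open scoped fwdDiff

theorem sum_range_neg_one_pow_mul_choose_mul_choose_s11 {N n i : ℕ} (hi : i ≤ N) (hn : N < n) :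
    ∑ k ∈ range (N + 1), (-1 : ℤ) ^ (k - i) * n.choose k * k.choose i =
      (-1) ^ (N - i) * n.choose i * (n - i - 1).choose (N - i) := by
  obtain ⟨m, rfl⟩ : ∃ m, n = m + 1 + i := ⟨n - i - 1, by omega⟩
  rw [show N + 1 = i + (N - i + 1) by omega, sum_range_add,
    sum_eq_zero fun k hk => by rw [Nat.choose_eq_zero_of_lt (mem_range.mp hk)]; simp, zero_add,
    Nat.add_sub_cancel, Nat.add_sub_cancel, mul_right_comm,
    ← Int.alternating_sum_range_choose_eq_choose, sum_mul]
  refine sum_congr rfl fun j _ => ?_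
  have h := Nat.choose_mul (n := m + 1 + i) (k := i + j) (Nat.le_add_right i j)
  rw [Nat.add_sub_cancel, Nat.add_sub_cancel_left] at h
  rw [Nat.add_sub_cancel_left, mul_assoc, ← Nat.cast_mul, h]
  push_cast; ring

theorem Polynomial.eval_natCast_eq_sum_of_natDegree_le {R : Type*} [CommRing R] {P : R[X]}
    {N n : ℕ} (hP : P.natDegree ≤ N) (hn : N < n) :
    P.eval (n : R) = ∑ i ∈ range (N + 1),
      (-1) ^ (N - i) * n.choose i * (n - i - 1).choose (N - i) * P.eval (i : R) := by
  have newton : P.eval (n : R) = ∑ k ∈ range (N + 1), n.choose k • Δ_[1] ^[k] P.eval 0 := by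
    rw [← nsmul_one, ← zero_add (n • 1), shift_eq_sum_fwdDiff_iter (1 : R) P.eval n 0]
    refine (sum_subset (range_subset_range.2 (by omega)) fun k _ hk => ?_).symm
    rw [fwdDiff_iter_eq_zero_of_degree_lt (by simp at hk; omega), Pi.zero_apply, smul_zero]
  have expand : ∀ k ∈ range (N + 1), n.choose k • Δ_[1] ^[k] P.eval 0 =
      ∑ i ∈ range (N + 1), (-1) ^ (k - i) * n.choose k * k.choose i * P.eval (i : R) := by
    intro k hk
    have hkN : k + 1 ≤ N + 1 := by simpa using hk
    rw [fwdDiff_iter_eq_sum_shift, smul_sum, sum_subset (range_subset_range.2 hkN)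
      fun i _ hi => by rw [Nat.choose_eq_zero_of_lt (n := k) (by simpa using hi)]; simp]
    refine sum_congr rfl fun i _ => ?_
    simp only [zero_add, nsmul_eq_mul, mul_one, zsmul_eq_mul]
    push_cast
    ring
  rw [newton, sum_congr rfl expand, sum_comm]
  refine sum_congr rfl fun i hi => ?_
  have hbinom := congrArg (Int.cast : ℤ → R)
    (sum_range_neg_one_pow_mul_choose_mul_choose_s11 (mem_range_succ_iff.mp hi) hn)
  push_cast at hbinom
  rw [← sum_mul, hbinom]

theorem Polynomial.coeff_mul_iterate_derivative_of_natDegree_le {R : Type*} [CommRing R]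
    {p q : R[X]} {i n : ℕ} (hp : p.natDegree ≤ i) (hq : q.natDegree ≤ n) :
    (p * derivative^[i] q).coeff n = p.coeff i * n.descFactorial i * q.coeff n := by
  rcases le_or_gt i n with hin | hni
  · obtain ⟨m, rfl⟩ := Nat.exists_eq_add_of_le hin
    rw [coeff_mul_add_eq_of_natDegree_le hp ((natDegree_iterate_derivative q i).trans (by omega)),
      coeff_iterate_derivative, add_comm m i, nsmul_eq_mul, mul_assoc]
  · rw [iterate_derivative_eq_zero (hq.trans_lt hni), mul_zero, coeff_zero,
      Nat.descFactorial_eq_zero_iff_lt.mpr hni, Nat.cast_zero, mul_zero, zero_mul]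

theorem natDegree_apoly_le (A : ℕ → ℕ → ℂ) (i : ℕ) : (apoly A i).natDegree ≤ i :=
  natDegree_sum_le_of_forall_le _ _ fun _ hj =>
    (natDegree_C_mul_X_pow_le _ _).trans (Nat.lt_succ_iff.mp (mem_range.mp hj))

theorem coeff_apoly_self (A : ℕ → ℕ → ℂ) (i : ℕ) : (apoly A i).coeff i = A i i := by
  simp [apoly]

noncomputable def eigenvaluePolynomial (A : ℕ → ℕ → ℂ) (N : ℕ) : ℂ[X] :=
  ∑ i ∈ Icc 1 N, C (A i i) * descPochhammer ℂ i

theorem natDegree_eigenvaluePolynomial_le (A : ℕ → ℕ → ℂ) (N : ℕ) :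
    (eigenvaluePolynomial A N).natDegree ≤ N :=
  natDegree_sum_le_of_forall_le _ _ fun i hi =>
    (natDegree_C_mul_le _ _).trans ((descPochhammer_natDegree ℂ i).trans_le (mem_Icc.mp hi).2)

theorem eval_zero_eigenvaluePolynomial (A : ℕ → ℕ → ℂ) (N : ℕ) :
    (eigenvaluePolynomial A N).eval 0 = 0 := by
  simp only [eigenvaluePolynomial, eval_finsetSum, eval_mul, eval_C]
  exact sum_eq_zero fun i hi => by
    simp [descPochhammer_ne_zero_eval_zero, (zero_lt_one.trans_le (mem_Icc.mp hi).1).ne']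

theorem eq_eval_eigenvaluePolynomial (A : ℕ → ℕ → ℂ) {N n : ℕ} {μ : ℂ} {P : ℂ[X]}
    (hmon : P.Monic) (hdeg : P.natDegree = n)
    (heq : ∑ i ∈ Icc 1 N, apoly A i * derivative^[i] P = C μ * P) :
    μ = (eigenvaluePolynomial A N).eval (n : ℂ) := by
  have hlead : P.coeff n = 1 := hdeg ▸ hmon.coeff_natDegree
  have hcoeff := congrArg (coeff · n) heq
  simp only [finsetSum_coeff, coeff_C_mul, hlead, mul_one,
    coeff_mul_iterate_derivative_of_natDegree_le (natDegree_apoly_le A _) hdeg.le,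
    coeff_apoly_self] at hcoeff
  simp only [eigenvaluePolynomial, eval_finsetSum, eval_mul, eval_C,
    descPochhammer_eval_eq_descFactorial, hcoeff]

theorem stmt11 (N : ℕ) (A : ℕ → ℕ → ℂ) (lam : ℕ → ℂ) (P : ℕ → Polynomial ℂ)
    (hmon : ∀ n, (P n).Monic) (hdeg : ∀ n, (P n).natDegree = n)
    (heq : ∀ n, ∑ i ∈ Icc 1 N, apoly A i * (Polynomial.derivative^[i] (P n)) = C (lam n) * P n) :
    ∀ n, N + 1 ≤ n →
      lam n = ∑ i ∈ Icc 1 N,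
        (-1 : ℂ) ^ (N - i) * (n.choose i : ℂ) * ((n - i - 1).choose (N - i) : ℂ) * lam i := by
  intro n hn
  have hlam : ∀ m, lam m = (eigenvaluePolynomial A N).eval (m : ℂ) := fun m =>
    eq_eval_eigenvaluePolynomial A (hmon m) (hdeg m) (heq m)
  rw [hlam n, eval_natCast_eq_sum_of_natDegree_le (natDegree_eigenvaluePolynomial_le A N) hn,
    range_eq_Ico, sum_eq_sum_Ico_succ_bot (by omega : 0 < N + 1), Nat.cast_zero,
    eval_zero_eigenvaluePolynomial, mul_zero, zero_add, Nat.zero_add,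
    Ico_add_one_right_eq_Icc]
  exact sum_congr rfl fun i _ => by rw [hlam i]
end

section
/- Fix N ≥ 1 and complex numbers c_1, …, c_N, and set c_s = 0 for s > N. Define δ_m = ∑_{s=1}^{m} C(m,s) · s! · c_s for m ∈ ℕ (so δ_0 = 0). For each n ∈ ℕ define the monic polynomial P_n(x) = x^n + ∑_{i=1}^{n} (δ_n · δ_{n−1} ⋯ δ_{n−i+1} / i!) · x^{n−i}. Then for every n ∈ ℕ, P_n satisfies ∑_{i=1}^{N} c_i · x^{i−1} · P_n^{(i)}(x) + x · P_n'(x) = n · P_n(x). -/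
/-
The Bochner operator `L` (`bochnerOp`) lowers degrees by at most one:
`L (X ^ m) = m X ^ m + δ_m X ^ (m - 1)`, since `x^{i-1} ∂^i x^m = m(m-1)⋯(m-i+1) x^{m-1}` and
`∑_i c_i m(m-1)⋯(m-i+1) = δ_m`. Writing `P_n = ∑_k a_k X^{n-k}` with `a_k = δ_n ⋯ δ_{n-k+1} / k!`,
the coefficients satisfy `(k + 1) a_{k+1} = δ_{n-k} a_k`, so the lowering part of `L P_n` is
`∑_k k a_k X^{n-k}`, and adding the Euler part `∑_k (n - k) a_k X^{n-k}` gives `n P_n`.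
-/

open Finset Polynomial

/-- `δ_m = ∑_{s=1}^{m} C(m,s) s! c_s` (denoted `δ_m^{(1)}` in the paper). -/
noncomputable def deltac (c : ℕ → ℂ) (m : ℕ) : ℂ :=
  ∑ s ∈ Icc 1 m, (m.choose s : ℂ) * (s.factorial : ℂ) * c s

/-- `P_n(x) = x^n + ∑_{i=1}^{n} (δ_n δ_{n-1} ⋯ δ_{n-i+1} / i!) x^{n-i}`. -/
noncomputable def Pc (c : ℕ → ℂ) (n : ℕ) : Polynomial ℂ :=
  X ^ n + ∑ i ∈ Icc 1 n, C ((∏ j ∈ range i, deltac c (n - j)) / (i.factorial : ℂ)) * X ^ (n - i)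

section Monomials

variable {R : Type*} [CommSemiring R]

theorem X_mul_derivative_X_pow (m : ℕ) :
    X * derivative (X ^ m : R[X]) = C (m : R) * X ^ m := by
  cases m with
  | zero => simp
  | succ k => rw [derivative_X_pow, mul_left_comm, ← pow_succ', Nat.add_sub_cancel]

theorem X_pow_pred_mul_iterate_derivative_X_pow {i : ℕ} (hi : 1 ≤ i) (m : ℕ) :
    X ^ (i - 1) * derivative^[i] (X ^ m : R[X]) = C (m.descFactorial i : R) * X ^ (m - 1) := by
  rw [iterate_derivative_X_pow_eq_C_mul]
  rcases le_or_gt i m with him | hmi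
  · rw [mul_left_comm, ← pow_add, show i - 1 + (m - i) = m - 1 by omega]
  · simp [Nat.descFactorial_eq_zero_iff_lt.2 hmi]

end Monomials

theorem deltac_eq_sum_descFactorial (c : ℕ → ℂ) (m : ℕ) :
    deltac c m = ∑ s ∈ Icc 1 m, c s * (m.descFactorial s : ℂ) := by
  refine sum_congr rfl fun s _ => ?_
  rw [Nat.descFactorial_eq_factorial_mul_choose]
  push_cast
  ring

theorem deltac_eq_sum_Icc {N : ℕ} {c : ℕ → ℂ} (hc : ∀ s, N < s → c s = 0) (m : ℕ) :
    deltac c m = ∑ i ∈ Icc 1 N, c i * (m.descFactorial i : ℂ) := by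
  rw [deltac_eq_sum_descFactorial]
  have hm : ∑ s ∈ Icc 1 m, c s * (m.descFactorial s : ℂ) =
      ∑ s ∈ Icc 1 (m + N), c s * (m.descFactorial s : ℂ) :=
    sum_subset (Icc_subset_Icc_right (Nat.le_add_right m N)) fun s hs hs' => by
      simp only [mem_Icc] at hs hs'
      rw [Nat.descFactorial_eq_zero_iff_lt.2 (by omega), Nat.cast_zero, mul_zero]
  have hN : ∑ s ∈ Icc 1 N, c s * (m.descFactorial s : ℂ) =
      ∑ s ∈ Icc 1 (m + N), c s * (m.descFactorial s : ℂ) :=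
    sum_subset (Icc_subset_Icc_right (Nat.le_add_left N m)) fun s hs hs' => by
      simp only [mem_Icc] at hs hs'
      rw [hc s (by omega), zero_mul]
  rw [hm, hN]

@[simp]
theorem deltac_zero (c : ℕ → ℂ) : deltac c 0 = 0 := by
  simp [deltac]

noncomputable def bochnerOp (N : ℕ) (c : ℕ → ℂ) : ℂ[X] →ₗ[ℂ] ℂ[X] :=
  ∑ i ∈ Icc 1 N, LinearMap.mulLeft ℂ (C (c i) * X ^ (i - 1)) ∘ₗ derivative ^ i +
    LinearMap.mulLeft ℂ X ∘ₗ derivative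

theorem bochnerOp_apply (N : ℕ) (c : ℕ → ℂ) (p : ℂ[X]) :
    bochnerOp N c p =
      ∑ i ∈ Icc 1 N, C (c i) * X ^ (i - 1) * derivative^[i] p + X * derivative p := by
  simp [bochnerOp, LinearMap.sum_apply, Module.End.pow_apply, mul_assoc]

theorem bochnerOp_X_pow {N : ℕ} {c : ℕ → ℂ} (hc : ∀ s, N < s → c s = 0) (m : ℕ) :
    bochnerOp N c (X ^ m) = (m : ℂ) • X ^ m + deltac c m • X ^ (m - 1) := by
  have lowering : ∑ i ∈ Icc 1 N, C (c i) * X ^ (i - 1) * derivative^[i] (X ^ m : ℂ[X]) =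
      C (deltac c m) * X ^ (m - 1) := by
    rw [deltac_eq_sum_Icc hc, map_sum, sum_mul]
    refine sum_congr rfl fun i hi => ?_
    rw [mul_assoc, X_pow_pred_mul_iterate_derivative_X_pow (mem_Icc.1 hi).1, ← mul_assoc,
      ← map_mul]
  rw [bochnerOp_apply, lowering, X_mul_derivative_X_pow, C_mul', C_mul', add_comm]

noncomputable def pcoeff (c : ℕ → ℂ) (n k : ℕ) : ℂ :=
  (∏ j ∈ range k, deltac c (n - j)) / k.factorial

theorem succ_mul_pcoeff_succ (c : ℕ → ℂ) (n k : ℕ) :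
    ((k + 1 : ℕ) : ℂ) * pcoeff c n (k + 1) = pcoeff c n k * deltac c (n - k) := by
  have hk : ((k + 1 : ℕ) : ℂ) ≠ 0 := Nat.cast_ne_zero.2 k.succ_ne_zero
  rw [pcoeff, pcoeff, prod_range_succ, Nat.factorial_succ, Nat.cast_mul]
  field_simp

theorem Pc_eq_sum_pcoeff (c : ℕ → ℂ) (n : ℕ) :
    Pc c n = ∑ k ∈ range (n + 1), pcoeff c n k • X ^ (n - k) := by
  rw [Pc, sum_range_succ', ← Ico_add_one_right_eq_Icc, sum_Ico_eq_sum_range]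
  simp [pcoeff, C_mul', add_comm]

theorem sum_pcoeff_mul_deltac_smul (c : ℕ → ℂ) (n : ℕ) :
    ∑ k ∈ range (n + 1), (pcoeff c n k * deltac c (n - k)) • (X ^ (n - k - 1) : ℂ[X]) =
      ∑ k ∈ range (n + 1), ((k : ℂ) * pcoeff c n k) • X ^ (n - k) := by
  rw [sum_range_succ, sum_range_succ']
  simp only [Nat.sub_self, deltac_zero, mul_zero, zero_smul, add_zero, Nat.cast_zero, zero_mul]
  refine sum_congr rfl fun k hk => ?_
  rw [succ_mul_pcoeff_succ, show n - k - 1 = n - (k + 1) by omega]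

theorem bochnerOp_Pc {N : ℕ} {c : ℕ → ℂ} (hc : ∀ s, N < s → c s = 0) (n : ℕ) :
    bochnerOp N c (Pc c n) = (n : ℂ) • Pc c n := by
  rw [Pc_eq_sum_pcoeff, map_sum, smul_sum]
  simp only [map_smul, bochnerOp_X_pow hc, smul_add, smul_smul]
  rw [sum_add_distrib, sum_pcoeff_mul_deltac_smul, ← sum_add_distrib]
  refine sum_congr rfl fun k hk => ?_
  rw [← add_smul, Nat.cast_sub (Nat.lt_succ_iff.1 (mem_range.1 hk))]
  congr 1
  ring

theorem stmt12_general (N : ℕ) (c : ℕ → ℂ) (hc : ∀ s, N < s → c s = 0) (n : ℕ) :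
    ∑ i ∈ Icc 1 N, C (c i) * X ^ (i - 1) * (Polynomial.derivative^[i] (Pc c n)) +
        X * Polynomial.derivative (Pc c n) = C (n : ℂ) * Pc c n := by
  rw [← bochnerOp_apply, bochnerOp_Pc hc, C_mul']

theorem stmt12 (N : ℕ) (hN : 1 ≤ N) (c : ℕ → ℂ) (hc : ∀ s, N < s → c s = 0) (n : ℕ) :
    ∑ i ∈ Icc 1 N, C (c i) * X ^ (i - 1) * (Polynomial.derivative^[i] (Pc c n)) +
        X * Polynomial.derivative (Pc c n) = C (n : ℂ) * Pc c n :=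
  stmt12_general N c hc n
end

section
/- Fix N ≥ 1 and complex numbers c_1, …, c_N, and set c_s = 0 for s > N. Define δ_m = ∑_{s=1}^{m} C(m,s) · s! · c_s for m ∈ ℕ. For each n ∈ ℕ define P_n(x) = x^n + ∑_{i=1}^{n} (δ_n · δ_{n−1} ⋯ δ_{n−i+1} / i!) · x^{n−i}, and set P_m = 0 for m < 0. For 0 ≤ s ≤ N−1 and n ≥ s define α_{n,n−s} = (δ_n · δ_{n−1} ⋯ δ_{n−s+1} / (s+1)!) · ∑_{j=0}^{s+1} C(s+1, j) · (−1)^j · δ_{n−s+j} (with the empty product equal to 1 when s = 0). Then for every n ∈ ℕ the (N+1)-term recurrence ∑_{s=1}^{N−1} α_{n,n−s} · P_{n−s}(x) + (α_{n,n} − x) · P_n(x) + P_{n+1}(x) = 0 holds, where terms α_{n,n−s} P_{n−s} with s > n are omitted (they multiply the zero polynomial). -/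
open Finset Polynomial

/-- `α_{n,n-s} = (δ_n δ_{n-1} ⋯ δ_{n-s+1} / (s+1)!) ∑_{j=0}^{s+1} C(s+1,j) (-1)^j δ_{n-s+j}`
(for `s ≤ n`, so that the indices `n - s + j` make sense). -/
noncomputable def alphac (c : ℕ → ℂ) (n s : ℕ) : ℂ :=
  ((∏ j ∈ range s, deltac c (n - j)) / ((s + 1).factorial : ℂ)) *
    ∑ j ∈ range (s + 2), ((s + 1).choose j : ℂ) * (-1) ^ j * deltac c (n - s + j)

/-!
Compare coefficients of `x ^ k` and put `i = n - k`. Writing `E` for the shift `f ↦ f (· + 1)`,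
the sum in `α_{n,n-s}` is `((1 - E) ^ (s + 1) δ) (n - s)`, and the contribution of
`α_{n,n-s} P_{n-s}` to that coefficient is
`(δ_n ⋯ δ_{k+1} / (i + 1)!) * C(i + 1, s + 1) * ((1 - E) ^ (s + 1) δ) (k + i - s)`.
Summed over `s`, this is the binomial expansion of `((1 - E) + E) ^ (i + 1) = 1` without its
`E ^ (i + 1)` term, i.e. `δ_k - δ_{n+1}` times the prefactor, which cancels against the
coefficients of `-x P_n + P_{n+1}`. Truncating the sum at `s = N - 1` costs nothing, because
`δ_m = ∑_t c_t m (m - 1) ⋯ (m - t + 1)` is a polynomial of degree `≤ N` in `m`, so its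
differences of order `> N` vanish.
-/

open fwdDiff_aux
open scoped fwdDiff

section ShiftOperator

variable {G : Type*} [AddCommGroup G]

lemma one_sub_shiftₗ_pow_apply (f : ℕ → G) (r p : ℕ) :
    ((1 - shiftₗ ℕ G 1) ^ r) f p =
      ∑ j ∈ range (r + 1), ((-1 : ℤ) ^ j * r.choose j) • f (p + j) := by
  rw [sub_eq_neg_add, (Commute.one_right _).add_pow r, LinearMap.sum_apply, Finset.sum_apply]
  refine Finset.sum_congr rfl fun j _ => ?_
  have : (-shiftₗ ℕ G 1) ^ j * 1 ^ (r - j) * (r.choose j : Module.End ℤ (ℕ → G)) =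
      (((-1) ^ j * r.choose j : ℤ) : Module.End ℤ (ℕ → G)) * shiftₗ ℕ G 1 ^ j := by
    rw [neg_pow, one_pow, mul_one, mul_assoc, ← (Nat.cast_commute _ _).eq, ← mul_assoc]
    push_cast
    rfl
  rw [this, Module.End.mul_apply, Module.End.intCast_apply, Pi.smul_apply, shiftₗ_pow_apply,
    smul_eq_mul, mul_one]

lemma sum_choose_smul_one_sub_shiftₗ_pow_apply (f : ℕ → G) (m k : ℕ) :
    ∑ r ∈ range (m + 1), m.choose r • ((1 - shiftₗ ℕ G 1) ^ r) f (k + (m - r)) = f k := by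
  set S := shiftₗ ℕ G 1
  have hc : Commute (1 - S) S := (Commute.one_left S).sub_left (Commute.refl S)
  have h := congr_fun (LinearMap.congr_fun (hc.add_pow m) f) k
  rw [sub_add_cancel, one_pow, Module.End.one_apply] at h
  rw [h, LinearMap.sum_apply, Finset.sum_apply]
  refine Finset.sum_congr rfl fun r _ => ?_
  rw [(hc.pow_pow r (m - r)).eq, Module.End.mul_apply, Module.End.natCast_apply, map_nsmul,
    Module.End.mul_apply, Pi.smul_apply, shiftₗ_pow_apply, smul_eq_mul, mul_one]

lemma one_sub_shiftₗ_pow_apply_eq_zsmul_fwdDiff_iter (f : ℕ → G) (r : ℕ) :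
    ((1 - shiftₗ ℕ G 1) ^ r) f = (-1 : ℤ) ^ r • Δ_[1] ^[r] f := by
  rw [shiftₗ, sub_add_cancel_right, neg_pow, Module.End.mul_apply, ← coe_fwdDiffₗ_pow]
  norm_cast

lemma fwdDiff_iter_comp_natCast {R : Type*} [AddCommMonoidWithOne R] (f : R → G) (r : ℕ) :
    Δ_[1] ^[r] (fun m : ℕ => f m) = fun m : ℕ => Δ_[1] ^[r] f (m : R) := by
  induction r generalizing f with
  | zero => rfl
  | succ r ih =>
    rw [Function.iterate_succ_apply, Function.iterate_succ_apply, ← ih]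
    congr 1
    ext m
    simp [fwdDiff]

end ShiftOperator

lemma deltac_eq_eval {N : ℕ} {c : ℕ → ℂ} (hc : ∀ s, N < s → c s = 0) (m : ℕ) :
    deltac c m = (∑ t ∈ Icc 1 N, C (c t) * descPochhammer ℂ t).eval (m : ℂ) := by
  have hsub : ∀ a b : ℕ, Icc 1 a ⊆ Icc 1 (a + b) := fun _ _ =>
    Icc_subset_Icc_right (Nat.le_add_right _ _)
  rw [eval_finsetSum, deltac, sum_subset (hsub m N), add_comm m N, sum_subset (hsub N m)]
  · refine sum_congr rfl fun t _ => ?_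
    rw [eval_mul, eval_C, descPochhammer_eval_eq_descFactorial,
      Nat.descFactorial_eq_factorial_mul_choose]
    push_cast
    ring
  · intro t ht hnt
    simp only [mem_Icc] at ht hnt
    simp [hc t (by omega)]
  · intro t ht hnt
    simp only [mem_Icc] at ht hnt
    simp [Nat.choose_eq_zero_of_lt (by omega : m < t)]

lemma fwdDiff_iter_deltac_eq_zero {N : ℕ} {c : ℕ → ℂ} (hc : ∀ s, N < s → c s = 0) {r : ℕ}
    (hr : N < r) : Δ_[1] ^[r] (deltac c) = 0 := by
  set P := ∑ t ∈ Icc 1 N, C (c t) * descPochhammer ℂ t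
  have hdeg : P.natDegree < r := by
    refine lt_of_le_of_lt (natDegree_sum_le_of_forall_le _ _ fun t ht => ?_) hr
    exact (natDegree_C_mul_le _ _).trans
      ((descPochhammer_natDegree ℂ t).trans_le (mem_Icc.1 ht).2)
  rw [funext (deltac_eq_eval hc), fwdDiff_iter_comp_natCast P.eval,
    fwdDiff_iter_eq_zero_of_degree_lt hdeg]
  rfl

lemma Pc_eq_sum (c : ℕ → ℂ) (n : ℕ) :
    Pc c n = ∑ i ∈ range (n + 1),
      C ((∏ j ∈ range i, deltac c (n - j)) / (i.factorial : ℂ)) * X ^ (n - i) := by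
  rw [Pc, Nat.range_succ_eq_Icc_zero, ← insert_Icc_add_one_left_eq_Icc n.zero_le,
    sum_insert (by simp)]
  simp

lemma coeff_Pc (c : ℕ → ℂ) (n k : ℕ) :
    (Pc c n).coeff k =
      if k ≤ n then (∏ j ∈ range (n - k), deltac c (n - j)) / ((n - k).factorial : ℂ) else 0 := by
  rw [Pc_eq_sum, finsetSum_coeff]
  simp_rw [coeff_C_mul_X_pow]
  split_ifs with hk
  · rw [sum_eq_single (n - k) (fun i hi hne => if_neg (by simp at hi; omega)) (by simp),
      if_pos (by omega)]
  · exact sum_eq_zero fun i hi => if_neg (by simp at hi; omega)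

lemma coeff_X_mul_Pc (c : ℕ → ℂ) (n k : ℕ) :
    (X * Pc c n).coeff k =
      if k ≤ n + 1 then
        (∏ j ∈ range (n + 1 - k), deltac c (n - j)) / ((n + 1 - k).factorial : ℂ)
      else 0 := by
  rcases k with _ | k
  · rw [mul_coeff_zero, coeff_X_zero, zero_mul, if_pos n.succ_pos.le, Nat.sub_zero,
      prod_range_succ, Nat.sub_self]
    simp [deltac]
  · rw [coeff_X_mul, coeff_Pc]
    simp only [Nat.add_le_add_iff_right, Nat.add_sub_add_right]

lemma alphac_eq (c : ℕ → ℂ) (n s : ℕ) :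
    alphac c n s = (∏ j ∈ range s, deltac c (n - j)) / ((s + 1).factorial : ℂ) *
      ((1 - shiftₗ ℕ ℂ 1) ^ (s + 1)) (deltac c) (n - s) := by
  rw [alphac, one_sub_shiftₗ_pow_apply]
  congr 1
  refine sum_congr rfl fun j _ => ?_
  rw [zsmul_eq_mul]
  push_cast
  ring

lemma alphac_eq_zero {N : ℕ} {c : ℕ → ℂ} (hc : ∀ s, N < s → c s = 0) (n : ℕ) {s : ℕ}
    (hs : N ≤ s) : alphac c n s = 0 := by
  rw [alphac_eq, one_sub_shiftₗ_pow_apply_eq_zsmul_fwdDiff_iter,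
    fwdDiff_iter_deltac_eq_zero hc (by omega)]
  simp

lemma alphac_mul_coeff_Pc (c : ℕ → ℂ) {k i s : ℕ} (hs : s ≤ i) :
    alphac c (k + i) s * (Pc c (k + i - s)).coeff k =
      (∏ j ∈ range i, deltac c (k + i - j)) / ((i + 1).factorial : ℂ) *
        ((i + 1).choose (s + 1) • ((1 - shiftₗ ℕ ℂ 1) ^ (s + 1)) (deltac c) (k + (i - s))) := by
  have hprod : ∏ j ∈ range i, deltac c (k + i - j) =
      (∏ j ∈ range s, deltac c (k + i - j)) * ∏ j ∈ range (i - s), deltac c (k + i - s - j) := by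
    rw [← Nat.add_sub_cancel' hs, prod_range_add, Nat.add_sub_cancel' hs]
    simp only [Nat.sub_sub]
  have hfac : ((i + 1).factorial : ℂ) =
      (i + 1).choose (s + 1) * (s + 1).factorial * (i - s).factorial := by
    rw [← Nat.succ_sub_succ i s]
    exact_mod_cast (Nat.choose_mul_factorial_mul_factorial (Nat.succ_le_succ hs)).symm
  rw [alphac_eq, coeff_Pc, if_pos (by omega), hprod, hfac, nsmul_eq_mul,
    show k + i - s - k = i - s by omega, show k + i - s = k + (i - s) by omega]
  have : ((i + 1).choose (s + 1) : ℂ) ≠ 0 :=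
    Nat.cast_ne_zero.2 ((i + 1).choose_pos (Nat.succ_le_succ hs)).ne'
  field_simp

lemma sum_alphac_mul_coeff_Pc {N : ℕ} {c : ℕ → ℂ} (hc : ∀ s, N < s → c s = 0) (k i : ℕ) :
    ∑ s ∈ range (min (N - 1) (k + i) + 1), alphac c (k + i) s * (Pc c (k + i - s)).coeff k =
      (∏ j ∈ range i, deltac c (k + i - j)) / ((i + 1).factorial : ℂ) *
        (deltac c k - deltac c (k + i + 1)) := by
  have h_range_N : ∑ s ∈ range (min (N - 1) (k + i) + 1),
      alphac c (k + i) s * (Pc c (k + i - s)).coeff k =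
        ∑ s ∈ range (k + i + 1), alphac c (k + i) s * (Pc c (k + i - s)).coeff k := by
    refine sum_subset (range_subset_range.2 (by omega)) fun s hs hsN => ?_
    simp only [mem_range] at hs hsN
    rw [alphac_eq_zero hc _ (by omega), zero_mul]
  have h_range_i : ∑ s ∈ range (i + 1), alphac c (k + i) s * (Pc c (k + i - s)).coeff k =
      ∑ s ∈ range (k + i + 1), alphac c (k + i) s * (Pc c (k + i - s)).coeff k := by
    refine sum_subset (range_subset_range.2 (by omega)) fun s hs hsi => ?_
    simp only [mem_range] at hs hsi
    rw [coeff_Pc, if_neg (by omega), mul_zero]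
  rw [h_range_N, ← h_range_i,
    sum_congr rfl fun s hs => alphac_mul_coeff_Pc c (Nat.lt_succ_iff.1 (mem_range.1 hs)),
    ← mul_sum]
  have newton := sum_choose_smul_one_sub_shiftₗ_pow_apply (deltac c) (i + 1) k
  rw [sum_range_succ'] at newton
  simp only [Nat.add_sub_add_right, Nat.choose_zero_right, pow_zero,
    Module.End.one_apply, one_smul, Nat.sub_zero, ← add_assoc] at newton
  rw [← newton, add_sub_cancel_right]

lemma recurrence_coeff_of_le {N : ℕ} {c : ℕ → ℂ} (hc : ∀ s, N < s → c s = 0) (k i : ℕ) :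
    ∑ s ∈ Icc 1 (min (N - 1) (k + i)), alphac c (k + i) s * (Pc c (k + i - s)).coeff k +
        (alphac c (k + i) 0 * (Pc c (k + i)).coeff k - (X * Pc c (k + i)).coeff k) +
      (Pc c (k + i + 1)).coeff k = 0 := by
  set Q := ∏ j ∈ range i, deltac c (k + i - j)
  have hsum := sum_alphac_mul_coeff_Pc hc k i
  rw [Nat.range_succ_eq_Icc_zero, ← insert_Icc_add_one_left_eq_Icc (Nat.zero_le _),
    sum_insert (by simp), Nat.sub_zero, zero_add] at hsum
  have hX : (X * Pc c (k + i)).coeff k = Q * deltac c k / ((i + 1).factorial : ℂ) := by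
    rw [coeff_X_mul_Pc, if_pos (by omega), show k + i + 1 - k = i + 1 by omega, prod_range_succ,
      show k + i - i = k by omega]
  have hP :
      (Pc c (k + i + 1)).coeff k = Q * deltac c (k + i + 1) / ((i + 1).factorial : ℂ) := by
    rw [coeff_Pc, if_pos (by omega), show k + i + 1 - k = i + 1 by omega, prod_range_succ',
      Nat.sub_zero]
    simp only [Q, show ∀ j, k + i + 1 - (j + 1) = k + i - j from fun j => by omega]
  rw [hX, hP]
  linear_combination hsum

lemma recurrence_coeff_of_lt {N : ℕ} {c : ℕ → ℂ} {n k : ℕ} (hk : n < k) :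
    ∑ s ∈ Icc 1 (min (N - 1) n), alphac c n s * (Pc c (n - s)).coeff k +
        (alphac c n 0 * (Pc c n).coeff k - (X * Pc c n).coeff k) +
      (Pc c (n + 1)).coeff k = 0 := by
  rw [sum_eq_zero fun s _ => by rw [coeff_Pc, if_neg (by omega), mul_zero], coeff_Pc,
    if_neg (by omega), coeff_X_mul_Pc, coeff_Pc]
  split_ifs with hk'
  · simp [show n + 1 - k = 0 by omega]
  · simp

theorem stmt13_general (N : ℕ) (c : ℕ → ℂ) (hc : ∀ s, N < s → c s = 0) (n : ℕ) :
    ∑ s ∈ Icc 1 (min (N - 1) n), C (alphac c n s) * Pc c (n - s) +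
        (C (alphac c n 0) - X) * Pc c n + Pc c (n + 1) = 0 := by
  ext k
  simp only [coeff_add, finsetSum_coeff, coeff_C_mul, sub_mul, coeff_sub, coeff_zero]
  rcases le_or_gt k n with hk | hk
  · obtain ⟨i, rfl⟩ := Nat.exists_eq_add_of_le hk
    exact recurrence_coeff_of_le hc k i
  · exact recurrence_coeff_of_lt hk

theorem stmt13 (N : ℕ) (hN : 1 ≤ N) (c : ℕ → ℂ) (hc : ∀ s, N < s → c s = 0) (n : ℕ) :
    ∑ s ∈ Icc 1 (min (N - 1) n), C (alphac c n s) * Pc c (n - s) +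
        (C (alphac c n 0) - X) * Pc c n + Pc c (n + 1) = 0 :=
  stmt13_general N c hc n
end

section
/- Let λ: ℕ → ℂ and, for each n ∈ ℕ, let P_n(x) = ∑_{i=0}^{n} b_{n,i} x^i be a monic polynomial of degree n (b_{n,n} = 1). Define δ_n^{(0)} = λ_n; for 1 ≤ k ≤ n define δ_n^{(k)} = (−1)^k · det(D), where D is the k×k matrix with entries (rows and columns indexed from 1 to k): D_{1,j} = (λ_{n−k} − λ_{n−k+j}) · b_{n−k+j, n−k} for 1 ≤ j ≤ k; D_{r,r−1} = 1 for 2 ≤ r ≤ k; D_{r,j} = b_{n−k+j, n−k+r−1} for 2 ≤ r ≤ j ≤ k; and D_{r,j} = 0 for j < r−1. Set δ_n^{(k)} = 0 for k > n. Define a_{n,n−k} = (1/n!) · ∑_{i=k}^{n} C(n,i) · (−1)^{n−i} · δ_i^{(k)} for 0 ≤ k ≤ n, and a_n(x) = ∑_{k=0}^{n} a_{n,n−k} x^{n−k}. Fix N ∈ ℕ. Then the following are equivalent: (1) a_i(x) = 0 for every i > N, and for every n, ∑_{i=0}^{N} a_i(x) · P_n^{(i)}(x) = λ_n · P_n(x);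 (2) for every n ≥ N+1 and 0 ≤ k ≤ N, δ_n^{(k)} = ∑_{i=k}^{N} (−1)^{N−i} · C(n,i) · C(n−i−1, N−i) · δ_i^{(k)}, and δ_n^{(k)} = 0 whenever n ≥ k > N. -/
/-!
Summing over all `i`, the operator `L = ∑ a_i ∂^i` sends `x^j` to `∑_s δ_j^{(s)} x^{j-s}`: the
definition of `a_{i,k}` is the binomial inversion of `δ_n^{(k)} = ∑_i n(n-1)⋯(n-i+1) a_{i,k}`.
By Cramer's rule, `δ_{p+k}^{(k)}` solves the unitriangular system
`∑_{k ≤ K} b_{p+K,p+k} x_k = λ_{p+K} b_{p+K,p}`, which is the coefficientwise form of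
`L P_n = λ_n P_n`. Hence the untruncated operator always has the prescribed eigenpairs, and (1)
says exactly that `a_i = 0` for `i > N`. The expansion of `δ_n^{(k)}` is triangular in `n` with
diagonal `n! ≠ 0`, so this vanishing holds iff `δ_n^{(k)}` equals its truncation at `i ≤ N` for
all `n > N`; a partial alternating binomial sum turns that truncation into the right-hand side
of (2).
-/

open Finset Polynomial

/-- The monic polynomial `P_n(x) = ∑_{i=0}^{n} b_{n,i} x^i`. -/
noncomputable def Pn (b : ℕ → ℕ → ℂ) (n : ℕ) : Polynomial ℂ :=
  ∑ i ∈ range (n + 1), C (b n i) * X ^ i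

/-- The sequence `δ_n^{(k)}` defined from `{λ_n}` and the coefficients `{b_{n,i}}`:
`δ_n^{(0)} = λ_n`, for `1 ≤ k ≤ n` it is `(-1)^k` times the determinant of the `k×k`
matrix `D` of the paper, and `δ_n^{(k)} = 0` for `k > n`. -/
noncomputable def deltaInv (lam : ℕ → ℂ) (b : ℕ → ℕ → ℂ) (n k : ℕ) : ℂ :=
  if k = 0 then lam n
  else if k ≤ n then
    (-1 : ℂ) ^ k *
      Matrix.det (fun r j : Fin k =>
        if (r : ℕ) = 0 then
          (lam (n - k) - lam (n - k + (j : ℕ) + 1)) * b (n - k + (j : ℕ) + 1) (n - k)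
        else if (j : ℕ) + 1 = (r : ℕ) then 1
        else if (r : ℕ) ≤ (j : ℕ) then b (n - k + (j : ℕ) + 1) (n - k + (r : ℕ))
        else 0)
  else 0

/-- `a_{n,n-k} = (1/n!) ∑_{i=k}^{n} C(n,i) (-1)^{n-i} δ_i^{(k)}`. -/
noncomputable def aInv (lam : ℕ → ℂ) (b : ℕ → ℕ → ℂ) (n k : ℕ) : ℂ :=
  (1 / (n.factorial : ℂ)) * ∑ i ∈ Icc k n, (n.choose i : ℂ) * (-1) ^ (n - i) * deltaInv lam b i k

/-- `a_n(x) = ∑_{k=0}^{n} a_{n,n-k} x^{n-k}`. -/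
noncomputable def aInvPoly (lam : ℕ → ℂ) (b : ℕ → ℕ → ℂ) (n : ℕ) : Polynomial ℂ :=
  ∑ k ∈ range (n + 1), C (aInv lam b n k) * X ^ (n - k)

theorem sum_range_neg_one_pow_mul_choose {R : Type*} [CommRing R] {m M : ℕ} (hMm : M ≤ m) :
    ∑ t ∈ range (M + 1), (-1 : R) ^ t * (m.choose t : R) = (-1) ^ M * ((m - 1).choose M : R) := by
  obtain rfl | ⟨m, rfl⟩ : m = 0 ∨ ∃ m', m = m' + 1 := by cases m <;> simp
  · obtain rfl : M = 0 := by omega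
    simp
  · simpa using congrArg (Int.cast : ℤ → R)
      (Int.alternating_sum_range_choose_eq_choose (n := m) (m := M))

theorem sum_Icc_neg_one_pow_mul_choose_mul_choose {R : Type*} [CommRing R] {j M n : ℕ}
    (hjM : j ≤ M) (hMn : M ≤ n) :
    ∑ i ∈ Icc j M, (-1 : R) ^ (i - j) * (n.choose i : R) * (i.choose j : R) =
      (-1) ^ (M - j) * (n.choose j : R) * ((n - j - 1).choose (M - j) : R) := by
  have hterm : ∀ i ∈ Icc j M, (-1 : R) ^ (i - j) * (n.choose i : R) * (i.choose j : R) =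
      (n.choose j : R) * ((-1) ^ (i - j) * ((n - j).choose (i - j) : R)) := by
    intro i hi
    have h := Nat.choose_mul (n := n) (mem_Icc.mp hi).1
    rw [mul_assoc, ← Nat.cast_mul, h, Nat.cast_mul]
    ring
  rw [sum_congr rfl hterm, ← mul_sum, ← Ico_add_one_right_eq_Icc, sum_Ico_eq_sum_range]
  simp only [Nat.add_sub_cancel_left]
  rw [show M + 1 - j = M - j + 1 by omega, sum_range_neg_one_pow_mul_choose (by omega),
    Nat.sub_right_comm]
  ring

section Coefficients

variable {lam : ℕ → ℂ} {b : ℕ → ℕ → ℂ}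

theorem aInv_of_lt {n k : ℕ} (h : n < k) : aInv lam b n k = 0 := by
  simp [aInv, Icc_eq_empty_of_lt h]

theorem deltaInv_of_lt {n k : ℕ} (h : n < k) : deltaInv lam b n k = 0 := by
  rw [deltaInv, if_neg (by omega), if_neg (by omega)]

theorem descFactorial_mul_aInv (n i k : ℕ) :
    (n.descFactorial i : ℂ) * aInv lam b i k =
      ∑ j ∈ Icc k i, (-1) ^ (i - j) * (n.choose i : ℂ) * (i.choose j : ℂ) * deltaInv lam b j k := by
  have hfac : (i.factorial : ℂ) ≠ 0 := by exact_mod_cast i.factorial_ne_zero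
  rw [Nat.descFactorial_eq_factorial_mul_choose, aInv, mul_sum, mul_sum]
  refine sum_congr rfl fun j _ => ?_
  field_simp
  push_cast
  ring

theorem sum_range_descFactorial_mul_aInv {M n : ℕ} (hMn : M ≤ n) (k : ℕ) :
    ∑ i ∈ range (M + 1), (n.descFactorial i : ℂ) * aInv lam b i k =
      ∑ j ∈ Icc k M, (-1) ^ (M - j) * (n.choose j : ℂ) * ((n - j - 1).choose (M - j) : ℂ) *
        deltaInv lam b j k := by
  simp only [descFactorial_mul_aInv]
  rw [sum_comm' (t' := Icc k M) (s' := fun j => Icc j M)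
    (by intros; simp only [mem_range, mem_Icc]; omega)]
  refine sum_congr rfl fun j hj => ?_
  rw [← sum_mul, sum_Icc_neg_one_pow_mul_choose_mul_choose (mem_Icc.mp hj).2 hMn]

theorem deltaInv_eq_sum_range_descFactorial_mul_aInv (n k : ℕ) :
    deltaInv lam b n k = ∑ i ∈ range (n + 1), (n.descFactorial i : ℂ) * aInv lam b i k := by
  rw [sum_range_descFactorial_mul_aInv le_rfl]
  rcases le_or_gt k n with hkn | hnk
  · rw [sum_eq_single_of_mem n (mem_Icc.mpr ⟨hkn, le_rfl⟩)]
    · simp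
    · intro j hj hjn
      rw [Nat.choose_eq_zero_of_lt (n := n - j - 1) (by grind)]
      simp
  · rw [Icc_eq_empty_of_lt hnk, sum_empty, deltaInv_of_lt hnk]

theorem forall_deltaInv_eq_sum_range_descFactorial_mul_aInv_iff (N : ℕ) :
    (∀ k n, N < n →
        deltaInv lam b n k = ∑ i ∈ range (N + 1), (n.descFactorial i : ℂ) * aInv lam b i k) ↔
      (∀ n, N + 1 ≤ n → ∀ k ≤ N,
        deltaInv lam b n k = ∑ i ∈ Icc k N,
          (-1 : ℂ) ^ (N - i) * (n.choose i : ℂ) * ((n - i - 1).choose (N - i) : ℂ) *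
            deltaInv lam b i k) ∧
      (∀ n k : ℕ, N < k → k ≤ n → deltaInv lam b n k = 0) := by
  constructor
  · intro h
    refine ⟨fun n hn k hk => ?_, fun n k hk hkn => ?_⟩
    · rw [h k n hn, sum_range_descFactorial_mul_aInv (by omega)]
    · rw [h k n (by omega), sum_range_descFactorial_mul_aInv (by omega), Icc_eq_empty_of_lt hk,
        sum_empty]
  · rintro ⟨hlow, hhigh⟩ k n hn
    rw [sum_range_descFactorial_mul_aInv hn.le]
    rcases le_or_gt k N with hk | hk
    · exact hlow n hn k hk
    · rw [Icc_eq_empty_of_lt hk, sum_empty]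
      rcases le_or_gt k n with hkn | hnk
      · exact hhigh n k hk hkn
      · exact deltaInv_of_lt hnk

end Coefficients

theorem forall_sum_range_descFactorial_mul_eq_iff {R : Type*} [CommRing R] [IsDomain R]
    [CharZero R] (c : ℕ → R) (N : ℕ) :
    (∀ n, N < n → ∑ i ∈ range (n + 1), (n.descFactorial i : R) * c i =
        ∑ i ∈ range (N + 1), (n.descFactorial i : R) * c i) ↔
      ∀ i, N < i → c i = 0 := by
  constructor
  · intro h i
    induction i using Nat.strong_induction_on with
    | _ i ih =>
      intro hi
      have htail : ∑ j ∈ range i, (i.descFactorial j : R) * c j =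
          ∑ j ∈ range (N + 1), (i.descFactorial j : R) * c j := by
        refine (sum_subset (range_subset_range.mpr hi) fun j hj hjN => ?_).symm
        rw [ih j (mem_range.mp hj) (by simpa using hjN), mul_zero]
      have hi' := h i hi
      rw [sum_range_succ, htail, add_eq_left, Nat.descFactorial_self] at hi'
      exact (mul_eq_zero.mp hi').resolve_left (by exact_mod_cast i.factorial_ne_zero)
  · intro h n hn
    refine (sum_subset (range_subset_range.mpr (by omega)) fun i _ hi => ?_).symm
    rw [h i (by simpa using hi), mul_zero]

section Cramer

open Matrix

theorem Matrix.cramer_mulVec {n α : Type*} [Fintype n] [DecidableEq n] [CommRing α]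
    (A : Matrix n n α) (x : n → α) : A.cramer (A *ᵥ x) = A.det • x := by
  rw [Matrix.cramer_eq_adjugate_mulVec, Matrix.mulVec_mulVec, Matrix.adjugate_mul,
    Matrix.smul_mulVec, Matrix.one_mulVec]

variable (lam : ℕ → ℂ) (b : ℕ → ℕ → ℂ) (p : ℕ)

/-- `deltaRec lam b p` solves, by forward substitution, the unitriangular system
`∑_{k ≤ K} b_{p+K, p+k} x_k = λ_{p+K} b_{p+K, p}` (for all `K`); by Cramer's rule its
solution is `x_k = δ_{p+k}^{(k)}`. -/
noncomputable def deltaRec : ℕ → ℂ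
  | 0 => lam p
  | K + 1 => lam (p + K + 1) * b (p + K + 1) p -
      ∑ k : Fin (K + 1), b (p + K + 1) (p + k) * deltaRec k

theorem deltaRec_succ (K : ℕ) :
    deltaRec lam b p (K + 1) = lam (p + K + 1) * b (p + K + 1) p -
      ∑ k ∈ range (K + 1), b (p + K + 1) (p + k) * deltaRec lam b p k := by
  rw [deltaRec, Fin.sum_univ_eq_sum_range (fun k => b (p + K + 1) (p + k) * deltaRec lam b p k)]

theorem sum_range_mul_deltaRec (hmon : ∀ n, b n n = 1) (K : ℕ) :
    ∑ k ∈ range (K + 1), b (p + K) (p + k) * deltaRec lam b p k = lam (p + K) * b (p + K) p := by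
  cases K with
  | zero => simp [deltaRec, mul_comm]
  | succ K =>
    rw [sum_range_succ, hmon, deltaRec_succ, ← add_assoc]
    ring

/-- The matrix `D` of the definition of `δ_n^{(K+1)}`, for `n = p + K + 1`. -/
noncomputable def deltaMat (K : ℕ) : Matrix (Fin (K + 1)) (Fin (K + 1)) ℂ :=
  of fun r j =>
    if (r : ℕ) = 0 then (lam p - lam (p + j + 1)) * b (p + j + 1) p
    else if (j : ℕ) + 1 = r then 1
    else if (r : ℕ) ≤ j then b (p + j + 1) (p + r)
    else 0

noncomputable def systemMat (K : ℕ) : Matrix (Fin (K + 1)) (Fin (K + 1)) ℂ :=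
  of fun i j => if j = i then 1 else if i < j then b (p + j + 1) (p + i + 1) else 0

noncomputable def systemRhs (K : ℕ) : Fin (K + 1) → ℂ :=
  fun j => (lam (p + j + 1) - lam p) * b (p + j + 1) p

theorem deltaInv_add_succ (K : ℕ) :
    deltaInv lam b (p + (K + 1)) (K + 1) = (-1) ^ (K + 1) * (deltaMat lam b p K).det := by
  rw [deltaInv, if_neg K.succ_ne_zero, if_pos (by omega), Nat.add_sub_cancel]
  rfl

theorem det_systemMat (K : ℕ) : (systemMat b p K).det = 1 := by
  rw [det_of_isUpperTriangular]
  · exact prod_eq_one fun i _ => by simp [systemMat]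
  · intro i j (hji : j < i)
    simp [systemMat, hji.ne, hji.not_gt]

theorem transpose_systemMat_mulVec_deltaRec (K : ℕ) :
    (systemMat b p K)ᵀ *ᵥ (fun j => deltaRec lam b p (j + 1)) = systemRhs lam b p K := by
  funext r
  let g : ℕ → ℂ := fun s => (if s = r then deltaRec lam b p (s + 1) else 0) +
    if s < r then b (p + r + 1) (p + s + 1) * deltaRec lam b p (s + 1) else 0
  have hterm : ∀ s : Fin (K + 1), (systemMat b p K)ᵀ r s * deltaRec lam b p (s + 1) = g s := by
    intro s
    simp only [g, transpose_apply, systemMat, of_apply, Fin.ext_iff, Fin.lt_def]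
    split_ifs <;> first | omega | ring
  simp only [mulVec, dotProduct, hterm]
  rw [Fin.sum_univ_eq_sum_range g, sum_add_distrib, sum_ite_eq', if_pos (mem_range.mpr r.isLt),
    ← sum_filter, show (range (K + 1)).filter (· < (r : ℕ)) = range r by ext; simp; omega,
    systemRhs, deltaRec_succ, sum_range_succ']
  simp only [add_assoc, add_zero, deltaRec]
  ring

theorem systemMat_updateRow_last (K : ℕ) :
    (systemMat b p K).updateRow (Fin.last K) (-systemRhs lam b p K) =
      (deltaMat lam b p K).submatrix (finRotate (K + 1)) id := by
  ext i j
  rcases eq_or_ne i (Fin.last K) with rfl | hi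
  · simp [deltaMat, systemRhs]
    ring
  · have hval : ((finRotate (K + 1) i : Fin (K + 1)) : ℕ) = i + 1 := by
      rw [finRotate_apply, Fin.val_add_one_of_lt (Fin.lt_last_iff_ne_last.mpr hi)]
    simp only [updateRow_ne hi, submatrix_apply, id, deltaMat, systemMat, of_apply, hval,
      Fin.ext_iff, Fin.lt_def]
    split_ifs <;> first | contradiction | omega | simp only [add_assoc]

theorem deltaRec_eq_deltaInv (k : ℕ) : deltaRec lam b p k = deltaInv lam b (p + k) k := by
  cases k with
  | zero => simp [deltaRec, deltaInv]
  | succ K =>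
    have hcramer := congrFun ((systemMat b p K)ᵀ.cramer_mulVec fun j => deltaRec lam b p (j + 1))
      (Fin.last K)
    rw [transpose_systemMat_mulVec_deltaRec, cramer_transpose_apply, det_transpose,
      det_systemMat, one_smul, Fin.val_last] at hcramer
    rw [← hcramer, deltaInv_add_succ, ← neg_neg (systemRhs lam b p K), ← neg_one_smul ℂ (-_),
      det_updateRow_smul, systemMat_updateRow_last, det_permute, sign_finRotate]
    push_cast
    ring

end Cramer

theorem sum_Icc_mul_deltaInv (lam : ℕ → ℂ) {b : ℕ → ℕ → ℂ} (hmon : ∀ n, b n n = 1) {t n : ℕ}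
    (htn : t ≤ n) :
    ∑ j ∈ Icc t n, b n j * deltaInv lam b j (j - t) = lam n * b n t := by
  obtain ⟨K, rfl⟩ := Nat.exists_eq_add_of_le htn
  rw [← Ico_add_one_right_eq_Icc, sum_Ico_eq_sum_range, show t + K + 1 - t = K + 1 by omega,
    ← sum_range_mul_deltaRec lam b t hmon K]
  refine sum_congr rfl fun k _ => ?_
  rw [Nat.add_sub_cancel_left, deltaRec_eq_deltaInv]

section Operator

variable {lam : ℕ → ℂ} {b : ℕ → ℕ → ℂ}

theorem coeff_aInvPoly_sub {n k : ℕ} (hk : k ≤ n) :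
    (aInvPoly lam b n).coeff (n - k) = aInv lam b n k := by
  simp only [aInvPoly, finsetSum_coeff, coeff_C_mul_X_pow]
  rw [sum_eq_single_of_mem k (mem_range.mpr (by omega)), if_pos rfl]
  intro k' hk' hne
  rw [if_neg (by simp only [mem_range] at hk'; omega)]

theorem aInvPoly_eq_zero_iff {n : ℕ} : aInvPoly lam b n = 0 ↔ ∀ k, aInv lam b n k = 0 := by
  refine ⟨fun h k => ?_, fun h => by simp [aInvPoly, h]⟩
  rcases le_or_gt k n with hk | hk
  · rw [← coeff_aInvPoly_sub hk, h, coeff_zero]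
  · exact aInv_of_lt hk

theorem aInvPoly_mul_X_pow {i j : ℕ} (hij : i ≤ j) :
    aInvPoly lam b i * X ^ (j - i) = ∑ k ∈ range (j + 1), C (aInv lam b i k) * X ^ (j - k) := by
  rw [aInvPoly, sum_mul, ← sum_subset (range_subset_range.mpr (by omega : i + 1 ≤ j + 1))
    fun k _ hk => by rw [aInv_of_lt (by simpa using hk), map_zero, zero_mul]]
  refine sum_congr rfl fun k hk => ?_
  rw [mul_assoc, ← pow_add, show i - k + (j - i) = j - k by simp only [mem_range] at hk; omega]

theorem sum_aInvPoly_mul_iterate_derivative_X_pow {j M : ℕ} (hjM : j ≤ M) :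
    ∑ i ∈ range (M + 1), aInvPoly lam b i * derivative^[i] (X ^ j) =
      ∑ k ∈ range (j + 1), C (deltaInv lam b j k) * X ^ (j - k) := by
  simp only [iterate_derivative_X_pow_eq_C_mul]
  rw [← sum_subset (range_subset_range.mpr (by omega : j + 1 ≤ M + 1)) fun i _ hi => by
    rw [Nat.descFactorial_eq_zero_iff_lt.mpr (by simpa using hi), Nat.cast_zero, map_zero,
      zero_mul, mul_zero]]
  calc ∑ i ∈ range (j + 1), aInvPoly lam b i * (C (j.descFactorial i : ℂ) * X ^ (j - i))
      = ∑ i ∈ range (j + 1), ∑ k ∈ range (j + 1),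
          C ((j.descFactorial i : ℂ) * aInv lam b i k) * X ^ (j - k) := by
        refine sum_congr rfl fun i hi => ?_
        rw [mul_left_comm, aInvPoly_mul_X_pow (by simpa [Nat.lt_succ_iff] using hi), mul_sum]
        simp only [C_mul, mul_assoc]
    _ = ∑ k ∈ range (j + 1), C (deltaInv lam b j k) * X ^ (j - k) := by
        rw [sum_comm]
        simp only [← sum_mul, ← map_sum, ← deltaInv_eq_sum_range_descFactorial_mul_aInv]

theorem sum_aInvPoly_mul_iterate_derivative_Pn (hmon : ∀ n, b n n = 1) {n M : ℕ} (hnM : n ≤ M) :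
    ∑ i ∈ range (M + 1), aInvPoly lam b i * derivative^[i] (Pn b n) = C (lam n) * Pn b n := by
  have hX : ∀ j ∈ range (n + 1), C (b n j) *
      ∑ i ∈ range (M + 1), aInvPoly lam b i * derivative^[i] (X ^ j) =
        ∑ t ∈ range (j + 1), C (b n j * deltaInv lam b j (j - t)) * X ^ t := by
    intro j hj
    rw [sum_aInvPoly_mul_iterate_derivative_X_pow (by simp only [mem_range] at hj; omega),
      ← sum_range_reflect, mul_sum]
    refine sum_congr rfl fun t ht => ?_
    rw [show j - (j + 1 - 1 - t) = t by simp only [mem_range] at ht; omega, C_mul, mul_assoc,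
      Nat.add_sub_cancel]
  calc ∑ i ∈ range (M + 1), aInvPoly lam b i * derivative^[i] (Pn b n)
      = ∑ j ∈ range (n + 1), C (b n j) *
          ∑ i ∈ range (M + 1), aInvPoly lam b i * derivative^[i] (X ^ j) := by
        simp only [Pn, iterate_derivative_sum, iterate_derivative_C_mul, mul_sum]
        rw [sum_comm]
        exact sum_congr rfl fun j _ => sum_congr rfl fun i _ => mul_left_comm _ _ _
    _ = ∑ t ∈ range (n + 1), ∑ j ∈ Icc t n, C (b n j * deltaInv lam b j (j - t)) * X ^ t := by
        rw [sum_congr rfl hX]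
        exact sum_comm' fun j t => by simp only [mem_range, mem_Icc]; omega
    _ = C (lam n) * Pn b n := by
        simp only [← sum_mul, ← map_sum, Pn, mul_sum, ← mul_assoc, ← C_mul]
        exact sum_congr rfl fun t ht =>
          by rw [sum_Icc_mul_deltaInv lam hmon (by simpa [Nat.lt_succ_iff] using ht)]

theorem sum_range_aInvPoly_mul_iterate_derivative_Pn_of_forall_eq_zero (hmon : ∀ n, b n n = 1)
    {N : ℕ} (hvan : ∀ i, N < i → aInvPoly lam b i = 0) (n : ℕ) :
    ∑ i ∈ range (N + 1), aInvPoly lam b i * derivative^[i] (Pn b n) = C (lam n) * Pn b n := by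
  rw [← sum_aInvPoly_mul_iterate_derivative_Pn hmon (le_max_right N n)]
  exact sum_subset (range_subset_range.mpr (by omega)) fun i _ hi => by
    rw [hvan i (by simpa using hi), zero_mul]

theorem forall_aInvPoly_eq_zero_iff (N : ℕ) :
    (∀ i, N < i → aInvPoly lam b i = 0) ↔ ∀ k n, N < n →
      deltaInv lam b n k = ∑ i ∈ range (N + 1), (n.descFactorial i : ℂ) * aInv lam b i k := by
  simp only [aInvPoly_eq_zero_iff, deltaInv_eq_sum_range_descFactorial_mul_aInv]
  exact ⟨fun h k => (forall_sum_range_descFactorial_mul_eq_iff _ N).mpr fun i hi => h i hi k,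
    fun h i hi k => (forall_sum_range_descFactorial_mul_eq_iff _ N).mp (h k) i hi⟩

end Operator

theorem stmt14 (N : ℕ) (lam : ℕ → ℂ) (b : ℕ → ℕ → ℂ) (hmon : ∀ n, b n n = 1) :
    ((∀ i, N < i → aInvPoly lam b i = 0) ∧
      (∀ n, ∑ i ∈ range (N + 1),
          aInvPoly lam b i * (Polynomial.derivative^[i] (Pn b n)) = C (lam n) * Pn b n)) ↔
    ((∀ n, N + 1 ≤ n → ∀ k ≤ N,
        deltaInv lam b n k = ∑ i ∈ Icc k N,
          (-1 : ℂ) ^ (N - i) * (n.choose i : ℂ) * ((n - i - 1).choose (N - i) : ℂ) *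
            deltaInv lam b i k) ∧
      (∀ n k : ℕ, N < k → k ≤ n → deltaInv lam b n k = 0)) := by
  rw [and_iff_left_of_imp
      (sum_range_aInvPoly_mul_iterate_derivative_Pn_of_forall_eq_zero hmon),
    forall_aInvPoly_eq_zero_iff, forall_deltaInv_eq_sum_range_descFactorial_mul_aInv_iff]
end

section
/- For all natural numbers N, n, ℓ with ℓ ≤ N ≤ n, one has C(n+1, ℓ) · (−1)^{n−ℓ} + ∑_{i=N+1}^{n} C(n+1, i) · C(i, ℓ) · C(i−ℓ−1, N−ℓ) · (−1)^{(N−ℓ)+(n−i)} = (−1)^{N−ℓ} · C(n+1, ℓ) · C(n−ℓ, N−ℓ). -/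
/-!
Put `m = N - l`, `k = n - l` and `i = l + 1 + j`. Since
`C(n+1, i) C(i, l) = C(n+1, l) C(k+1, j+1)`, the identity reduces, up to signs and the
factor `C(n+1, l)`, to `∑_{j ≤ k} (-1)^j C(k+1, j+1) C(j, m) = (-1)^m`. By Pascal's rule
that sum is `∑_{t ≤ k} ∑_j (-1)^j C(t, j) C(j, m)`, and the inner sum is `(-1)^m [t = m]` because
`C(t, j) C(j, m) = C(t, m) C(t-m, j-m)`.
-/

open Finset

theorem Int.alternating_sum_range_choose_mul_choose (n m : ℕ) :
    ∑ j ∈ Finset.range (n + 1), (-1 : ℤ) ^ j * n.choose j * j.choose m =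
      if n = m then (-1) ^ m else 0 := by
  rcases lt_or_ge n m with hnm | hmn
  · rw [if_neg hnm.ne]
    refine sum_eq_zero fun j hj => ?_
    rw [Nat.choose_eq_zero_of_lt (by grind : j < m), Nat.cast_zero, mul_zero]
  obtain ⟨d, rfl⟩ := Nat.exists_eq_add_of_le hmn
  calc ∑ j ∈ Finset.range (m + d + 1), (-1 : ℤ) ^ j * (m + d).choose j * j.choose m
      = ∑ t ∈ Finset.range (d + 1),
          (-1 : ℤ) ^ (m + t) * (m + d).choose (m + t) * (m + t).choose m := by
        rw [add_assoc, sum_range_add, add_eq_right]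
        refine sum_eq_zero fun j hj => ?_
        rw [Nat.choose_eq_zero_of_lt (mem_range.1 hj), Nat.cast_zero, mul_zero]
    _ = (-1) ^ m * (m + d).choose m *
          ∑ t ∈ Finset.range (d + 1), (-1 : ℤ) ^ t * d.choose t := by
        rw [mul_sum]
        refine sum_congr rfl fun t _ => ?_
        have h := Nat.choose_mul (n := m + d) (le_add_right (le_refl m) : m ≤ m + t)
        simp only [Nat.add_sub_cancel_left] at h
        rw [mul_assoc, ← Nat.cast_mul, h, pow_add]
        push_cast
        ring
    _ = if m + d = m then (-1) ^ m else 0 := by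
        rw [Int.alternating_sum_range_choose]
        split_ifs <;> simp_all

theorem Int.alternating_sum_range_choose_succ_mul_choose (K m : ℕ) :
    ∑ j ∈ Finset.range K, (-1 : ℤ) ^ j * K.choose (j + 1) * j.choose m =
      if m < K then (-1) ^ m else 0 := by
  induction K with
  | zero => simp
  | succ K ih =>
    have pascal :
        ∑ j ∈ Finset.range (K + 1), (-1 : ℤ) ^ j * (K + 1).choose (j + 1) * j.choose m =
        ∑ j ∈ Finset.range (K + 1), (-1 : ℤ) ^ j * K.choose j * j.choose m +
          ∑ j ∈ Finset.range (K + 1), (-1 : ℤ) ^ j * K.choose (j + 1) * j.choose m := by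
      rw [← sum_add_distrib]
      refine sum_congr rfl fun j _ => ?_
      rw [Nat.choose_succ_succ]
      push_cast
      ring
    rw [pascal, Int.alternating_sum_range_choose_mul_choose, sum_range_succ _ K,
      Nat.choose_succ_self, Nat.cast_zero, mul_zero, zero_mul, add_zero, ih]
    split_ifs <;> omega

theorem Int.alternating_sum_range_choose_succ_mul_choose_of_le {m k : ℕ} (h : m ≤ k) :
    ∑ j ∈ Finset.range k, (-1 : ℤ) ^ j * (k + 1).choose (j + 1) * j.choose m =
      (-1) ^ m - (-1) ^ k * k.choose m := by
  have key := Int.alternating_sum_range_choose_succ_mul_choose (k + 1) m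
  rw [sum_range_succ, Nat.choose_self, if_pos (Nat.lt_succ_of_le h)] at key
  linear_combination key

theorem Finset.sum_Icc_eq_sum_range_of_eq_zero {M : Type*} [AddCommMonoid M] {F : ℕ → M}
    {l N : ℕ} (n : ℕ) (hlN : l ≤ N) (hF : ∀ i, l < i → i ≤ N → F i = 0) :
    ∑ i ∈ Icc (N + 1) n, F i = ∑ j ∈ range (n - l), F (l + 1 + j) := by
  rw [sum_subset (s₂ := Ico (l + 1) (n + 1)), sum_Ico_eq_sum_range, Nat.add_sub_add_right]
  · intro i hi
    simp only [mem_Icc, mem_Ico] at hi ⊢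
    omega
  · intro i hi hi'
    simp only [mem_Icc, mem_Ico, not_and_or] at hi hi'
    exact hF i (by omega) (by omega)

theorem stmt17 (N n l : ℕ) (h1 : l ≤ N) (h2 : N ≤ n) :
    ((n + 1).choose l : ℤ) * (-1) ^ (n - l) +
      ∑ i ∈ Finset.Icc (N + 1) n,
        ((n + 1).choose i : ℤ) * (i.choose l : ℤ) * ((i - l - 1).choose (N - l) : ℤ) *
          (-1) ^ ((N - l) + (n - i)) =
      (-1) ^ (N - l) * ((n + 1).choose l : ℤ) * ((n - l).choose (N - l) : ℤ) := by
  set m := N - l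
  set k := n - l
  set F : ℕ → ℤ := fun i => ((n + 1).choose i : ℤ) * (i.choose l : ℤ) *
    ((i - l - 1).choose m : ℤ) * (-1) ^ (m + (n - i))
  have hshift : ∑ i ∈ Icc (N + 1) n, F i = ∑ j ∈ range k, F (l + 1 + j) :=
    sum_Icc_eq_sum_range_of_eq_zero n h1 fun i hli hiN => by
      simp [F, Nat.choose_eq_zero_of_lt (by omega : i - l - 1 < m)]
  have hterm : ∀ j ∈ range k, F (l + 1 + j) = -(((n + 1).choose l : ℤ) * (-1) ^ (m + k)) *
      ((-1) ^ j * (k + 1).choose (j + 1) * j.choose m) := by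
    intro j hj
    have hj := mem_range.1 hj
    have hchoose : ((n + 1).choose (l + 1 + j) : ℤ) * (l + 1 + j).choose l =
        (n + 1).choose l * (k + 1).choose (j + 1) := by
      have h := Nat.choose_mul (n := n + 1) (le_add_right (Nat.le_succ l) : l ≤ l + 1 + j)
      rw [show n + 1 - l = k + 1 by omega, show l + 1 + j - l = j + 1 by omega] at h
      exact_mod_cast h
    have hsign : (-1 : ℤ) ^ (m + (n - (l + 1 + j))) = -((-1) ^ (m + k) * (-1) ^ j) := by
      rw [← pow_add, ← neg_one_mul ((-1 : ℤ) ^ (m + k + j)), ← pow_succ']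
      exact neg_one_pow_congr (by simp only [Nat.even_iff]; omega)
    simp only [F, hsign, show l + 1 + j - l - 1 = j by omega]
    linear_combination (-(j.choose m : ℤ) * ((-1) ^ (m + k) * (-1) ^ j)) * hchoose
  have hsq : ∀ a : ℕ, (-1 : ℤ) ^ a * (-1) ^ a = 1 := fun a => by rw [← mul_pow]; norm_num
  rw [hshift, sum_congr rfl hterm, ← mul_sum,
    Int.alternating_sum_range_choose_succ_mul_choose_of_le (by omega : m ≤ k), pow_add]
  linear_combination (-((n + 1).choose l : ℤ) * (-1) ^ k) * hsq m +
    ((n + 1).choose l * (-1) ^ m * k.choose m : ℤ) * hsq k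
end

section
/- For all natural numbers N, n, ℓ with ℓ ≤ N and n ≥ N+1, one has ∑_{i=N+1}^{n} (−1)^{i−N} / ( (i−ℓ) · (n−i)! · (i−N−1)! ) = − (N−ℓ)! / (n−ℓ)!. -/
/-!
Writing `n = N + 1 + M`, `N = l + k` and `i = N + 1 + j`, the sum becomes
`-(1/M!) ∑_{j ≤ M} (-1)^j C(M, j) / (k + j + 1)`. By Newton's formula this alternating binomial
sum is, up to the sign `(-1)^M`, the `M`-th forward difference at `k` of `x ↦ 1/(x + 1)`, and an
induction on `M` gives `Δ^M [1/(x+1)] = (-1)^M M! x! / (x + M + 1)!`, the discrete analogue of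
`d^M/dx^M (x+1)⁻¹`.
-/

open Finset Nat fwdDiff

variable {K : Type*} [Field K] [CharZero K]

theorem fwdDiff_iter_inv_add_one (M x : ℕ) :
    (Δ_[1])^[M] (fun y : ℕ ↦ ((y : K) + 1)⁻¹) x =
      (-1) ^ M * M ! * x ! / (x + M + 1)! := by
  induction M generalizing x with
  | zero =>
    have : (x ! : K) ≠ 0 := cast_ne_zero.mpr (factorial_ne_zero x)
    simp [factorial_succ, field]
  | succ M ih =>
    rw [Function.iterate_succ_apply', fwdDiff, ih, ih,
      show x + 1 + M + 1 = x + M + 1 + 1 by ring, show x + (M + 1) + 1 = x + M + 1 + 1 by ring,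
      factorial_succ (x + M + 1), factorial_succ x, factorial_succ M]
    have : ((x + M + 1)! : K) ≠ 0 := cast_ne_zero.mpr (factorial_ne_zero _)
    have : (x + M + 1 + 1 : K) ≠ 0 := by exact_mod_cast succ_ne_zero (x + M + 1)
    push_cast
    field_simp
    ring

theorem sum_range_neg_one_pow_mul_choose_div (M k : ℕ) :
    ∑ j ∈ range (M + 1), (-1 : K) ^ j * M.choose j / (k + j + 1) =
      M ! * k ! / (k + M + 1)! := by
  have newton := fwdDiff_iter_eq_sum_shift (1 : ℕ) (fun y : ℕ ↦ ((y : K) + 1)⁻¹) M k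
  rw [fwdDiff_iter_inv_add_one] at newton
  calc ∑ j ∈ range (M + 1), (-1 : K) ^ j * M.choose j / (k + j + 1)
      = (-1) ^ M * ∑ j ∈ range (M + 1), ((-1 : ℤ) ^ (M - j) * M.choose j) •
          ((((k + j • 1 : ℕ)) : K) + 1)⁻¹ := by
        rw [mul_sum]
        refine sum_congr rfl fun j hj ↦ ?_
        have hjM : j ≤ M := Nat.lt_succ_iff.mp (mem_range.mp hj)
        have hsign : (-1 : K) ^ M * (-1) ^ (M - j) = (-1) ^ j := by
          rw [← pow_add, show M + (M - j) = j + 2 * (M - j) by omega, pow_add, pow_mul]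
          simp
        rw [zsmul_eq_mul, smul_eq_mul, mul_one, ← hsign]
        push_cast
        ring
    _ = M ! * k ! / (k + M + 1)! := by
        rw [← newton, ← mul_div_assoc, ← mul_assoc, ← mul_assoc, ← pow_add, ← two_mul, pow_mul]
        simp

theorem neg_one_pow_succ_div_eq_choose {M j : ℕ} (k : ℕ) (hjM : j ≤ M) :
    (-1 : K) ^ (j + 1) / (((k + j + 1 : ℕ) : K) * (M - j)! * j !) =
      -(M ! : K)⁻¹ * ((-1) ^ j * M.choose j / (k + j + 1)) := by
  have : ((M - j)! : K) ≠ 0 := cast_ne_zero.mpr (factorial_ne_zero _)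
  have : (j ! : K) ≠ 0 := cast_ne_zero.mpr (factorial_ne_zero _)
  have : (M ! : K) ≠ 0 := cast_ne_zero.mpr (factorial_ne_zero _)
  rw [cast_choose K hjM]
  push_cast
  field_simp
  ring

theorem stmt18 (N n l : ℕ) (h1 : l ≤ N) (h2 : N + 1 ≤ n) :
    ∑ i ∈ Finset.Icc (N + 1) n,
        (-1 : ℚ) ^ (i - N) / (((i - l : ℕ) : ℚ) * ((n - i).factorial : ℚ) * ((i - N - 1).factorial : ℚ)) =
      -(((N - l).factorial : ℚ) / ((n - l).factorial : ℚ)) := by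
  obtain ⟨M, rfl⟩ : ∃ M, n = N + 1 + M := ⟨n - (N + 1), by omega⟩
  obtain ⟨k, rfl⟩ : ∃ k, N = l + k := ⟨N - l, by omega⟩
  rw [← Ico_add_one_right_eq_Icc, sum_Ico_eq_sum_range,
    show l + k + 1 + M + 1 - (l + k + 1) = M + 1 by omega]
  have hM : (M ! : ℚ) ≠ 0 := cast_ne_zero.mpr (factorial_ne_zero M)
  calc _ = ∑ j ∈ range (M + 1), -(M ! : ℚ)⁻¹ * ((-1) ^ j * M.choose j / (k + j + 1)) := by
        refine sum_congr rfl fun j hj ↦ ?_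
        have hjM : j ≤ M := Nat.lt_succ_iff.mp (mem_range.mp hj)
        rw [show l + k + 1 + j - (l + k) = j + 1 by omega, show l + k + 1 + j - l = k + j + 1 by omega,
          show l + k + 1 + M - (l + k + 1 + j) = M - j by omega, Nat.add_sub_cancel]
        exact neg_one_pow_succ_div_eq_choose k hjM
    _ = -((k ! : ℚ) / (l + k + 1 + M - l)!) := by
        rw [← mul_sum, sum_range_neg_one_pow_mul_choose_div, show l + k + 1 + M - l = k + M + 1 by omega]
        field_simp
  rw [Nat.add_sub_cancel_left]
end

section
/- For all natural numbers t, N, s with s ≤ N ≤ t, one has ∑_{j=s}^{N} C(t+1, j) · C(j, s) · (−1)^{j−s} = (−1)^{N−s} · C(t+1, s) · C(t−s, t−N). -/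
open Finset

/-- Since `C(t+1, j) C(j, s) = C(t+1, s) C(t+1-s, j-s)`, the sum is `C(t+1, s)` times a partial
alternating sum along the row `t+1-s` of Pascal's triangle, which telescopes to `±C(t-s, N-s)`. -/
theorem Int.sum_Icc_choose_mul_choose_mul_neg_one_pow {t N s : ℕ} (hsN : s ≤ N) (hst : s ≤ t) :
    ∑ j ∈ Icc s N, ((t + 1).choose j : ℤ) * (j.choose s : ℤ) * (-1) ^ (j - s) =
      (-1) ^ (N - s) * ((t + 1).choose s : ℤ) * ((t - s).choose (N - s) : ℤ) := by
  have hterm (k : ℕ) : ((t + 1).choose (s + k) : ℤ) * ((s + k).choose s : ℤ) * (-1) ^ (s + k - s)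
      = ((t + 1).choose s : ℤ) * ((-1) ^ k * ((t - s + 1).choose k : ℤ)) := by
    have hmul : ((t + 1).choose (s + k) : ℤ) * ((s + k).choose s : ℤ)
        = ((t + 1).choose s : ℤ) * ((t - s + 1).choose k : ℤ) := by
      have := Nat.choose_mul (n := t + 1) (k := s + k) (s := s) (by omega)
      rw [show t + 1 - s = t - s + 1 by omega, Nat.add_sub_cancel_left] at this
      exact_mod_cast this
    rw [hmul, Nat.add_sub_cancel_left]
    ring
  rw [← Ico_add_one_right_eq_Icc, sum_Ico_eq_sum_range, show N + 1 - s = N - s + 1 by omega]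
  simp only [hterm]
  rw [← mul_sum, Int.alternating_sum_range_choose_eq_choose]
  ring

theorem stmt19 (t N s : ℕ) (h1 : s ≤ N) (h2 : N ≤ t) :
    ∑ j ∈ Finset.Icc s N, ((t + 1).choose j : ℤ) * (j.choose s : ℤ) * (-1) ^ (j - s) =
      (-1) ^ (N - s) * ((t + 1).choose s : ℤ) * ((t - s).choose (t - N) : ℤ) := by
  rw [Int.sum_Icc_choose_mul_choose_mul_neg_one_pow h1 (h1.trans h2),
    Nat.choose_symm_of_eq_add (by omega : t - s = (N - s) + (t - N))]
end
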